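/- arXiv:math/9904107 — 6 statements merged into one kernel-verified Lean document; each statement's English description precedes it below -/
import Mathlib

section
/- Let n ≥ 1 and let p be a 132-avoiding permutation of [n]. For every i with 1 ≤ i ≤ n−1, i is a descent of p (i.e., p(i) > p(i+1)) if and only if p(i+1) is a left-to-right minimum of p, i.e., p(i+1) < p(j) for all j ≤ i. Consequently, for 132-avoiding permutations p and q, Des(p) ⊆ Des(q) if and only if the set of positions of left-to-right minima of p is contained in the set of positions of left-to-right minima of q. -/
/-- A permutation `p` of `[n]` (positions and values in `Fin n`, 0-based) is
132-avoiding if there are no positions `a < b < c` with `p a < p c < p b`. -/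
def Avoids132 {n : ℕ} (p : Equiv.Perm (Fin n)) : Prop :=
  ∀ a b c : Fin n, a < b → b < c → ¬ (p a < p c ∧ p c < p b)

/-- The descent set of `p`, as a set of 1-based positions `i ∈ [n-1]`:
`i` is a descent iff `p(i) > p(i+1)`, i.e. (0-based) `p ⟨i-1⟩ > p ⟨i⟩`. -/
def Des {n : ℕ} (p : Equiv.Perm (Fin n)) : Set ℕ :=
  {i | ∃ h : 1 ≤ i ∧ i < n,
        p ⟨i, h.2⟩ < p ⟨i - 1, Nat.lt_of_le_of_lt (Nat.sub_le i 1) h.2⟩}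

/-- The set of 1-based positions `j ∈ [n]` at which `p` has a left-to-right
minimum, i.e. `p(j) < p(i)` for all `i < j`. -/
def LRMinPos {n : ℕ} (p : Equiv.Perm (Fin n)) : Set ℕ :=
  {j | ∃ h : 1 ≤ j ∧ j ≤ n,
        ∀ i : Fin n, (i : ℕ) < j - 1 →
          p ⟨j - 1, Nat.lt_of_lt_of_le (Nat.sub_lt h.1 Nat.one_pos) h.2⟩ < p i}

/-!
If `p (i+1) < p i` and some earlier entry `p j` were smaller than `p (i+1)`, then
`p j, p i, p (i+1)` would be an occurrence of 132. So in a 132-avoiding permutation the bottoms of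
the descents are exactly the left-to-right minima other than the first entry, i.e.
`LRMinPos p = {1} ∪ (Des p + 1)`, and inclusions of descent sets and of left-to-right minima
positions are equivalent.
-/

open Equiv

namespace Avoids132

variable {n : ℕ} {p : Perm (Fin n)}

theorem apply_lt_of_inversion (hp : Avoids132 p) {a b c : Fin n} (hab : a < b) (hbc : b < c)
    (hcb : p c < p b) : p c < p a := by
  refine lt_of_not_ge fun hac => hp a b c hab hbc ⟨lt_of_le_of_ne hac fun h => ?_, hcb⟩
  exact (hab.trans hbc).ne (p.injective h)

theorem lt_iff_forall_lt_of_succ_eq (hp : Avoids132 p) {a b : Fin n} (hab : (a : ℕ) + 1 = b) :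
    p b < p a ↔ ∀ j < b, p b < p j := by
  have hab' : a < b := by rw [Fin.lt_def]; omega
  refine ⟨fun hba j hjb => ?_, fun h => h a hab'⟩
  obtain hja | rfl : j < a ∨ j = a := by rw [Fin.lt_def] at hjb ⊢; rw [Fin.ext_iff]; omega
  · exact hp.apply_lt_of_inversion hja hab' hba
  · exact hba

theorem mem_Des_iff (hp : Avoids132 p) {i : ℕ} (hi : 1 ≤ i) : i ∈ Des p ↔ i + 1 ∈ LRMinPos p := by
  simp only [Des, LRMinPos, Set.mem_ofPred_eq, Nat.add_sub_cancel]
  constructor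
  · rintro ⟨h, hd⟩
    exact ⟨⟨by omega, h.2⟩, (hp.lt_iff_forall_lt_of_succ_eq (by simp; omega)).1 hd⟩
  · rintro ⟨h, hmin⟩
    exact ⟨⟨hi, h.2⟩, (hp.lt_iff_forall_lt_of_succ_eq (by simp; omega)).2 hmin⟩

theorem LRMinPos_eq (hp : Avoids132 p) (hn : 1 ≤ n) :
    LRMinPos p = insert 1 ((· + 1) '' Des p) := by
  ext j
  rcases j with _ | _ | j
  · simp [LRMinPos, Des]
  · simpa [LRMinPos] using hn
  · rw [← hp.mem_Des_iff (by omega)]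
    simp

end Avoids132

/-- In a 132-avoiding permutation, `i ∈ [n-1]` is a descent iff the entry in
position `i+1` is a left-to-right minimum; consequently, for 132-avoiding
`p`, `q`: `Des p ⊆ Des q` iff the positions of left-to-right minima of `p`
are contained in those of `q`. -/
theorem stmt0 (n : ℕ) (hn : 1 ≤ n) :
    (∀ p : Equiv.Perm (Fin n), Avoids132 p →
      ∀ i : ℕ, (h : 1 ≤ i ∧ i < n) →
        (p ⟨i, h.2⟩ < p ⟨i - 1, Nat.lt_of_le_of_lt (Nat.sub_le i 1) h.2⟩ ↔
          ∀ j : Fin n, (j : ℕ) < i → p ⟨i, h.2⟩ < p j)) ∧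
    (∀ p q : Equiv.Perm (Fin n), Avoids132 p → Avoids132 q →
      (Des p ⊆ Des q ↔ LRMinPos p ⊆ LRMinPos q)) := by
  refine ⟨fun p hp i h => hp.lt_iff_forall_lt_of_succ_eq (by simp; omega), fun p q hp hq => ?_⟩
  have one_notMem : 1 ∉ (· + 1) '' Des p := by simp [Des]
  rw [hp.LRMinPos_eq hn, hq.LRMinPos_eq hn, Set.insert_subset_insert_iff one_notMem,
    Set.image_subset_image_iff (add_left_injective 1)]
end

section
/- For every n ≥ 1 there exists a bijection f from the set of noncrossing partitions of [n] onto the set of 132-avoiding permutations of [n] such that for every noncrossing partition π and every i with 1 ≤ i ≤ n−1: i ∈ Des(f(π)) if and only if i+1 is the smallest element of the block of π containing it. -/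
/-- A set partition of `[n]` (encoded as a setoid on `Fin n`, with element
`e : Fin n` representing `e+1 ∈ [n]`) is noncrossing if there are no
`a < b < c < d` with `a, c` in one block and `b, d` in a different block. -/
def IsNoncrossing {n : ℕ} (r : Setoid (Fin n)) : Prop :=
  ¬ ∃ a b c d : Fin n, a < b ∧ b < c ∧ c < d ∧ r.r a c ∧ r.r b d ∧ ¬ r.r a b

/-!
Encode a partition by the map `m` sending each element to the least element of its block.
For partitions this map is idempotent and below the identity, and noncrossingness becomes the
nesting condition `i < j → m j ≤ i → m j ≤ m i`. Such a map defines a strict total order on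
`[n]`: for `k < j`, `k` comes before `j` iff `m j ≤ k`, and `j` comes before `k` otherwise. The
permutation is the rank function of this order, and it avoids 132. Conversely, for a 132-avoiding
`p`, `m j` is recovered as the least `i` such that `p j` is the largest value of `p` on `[i, j]`.
Finally, `p (j - 1) > p j` means that `j` precedes `j - 1`, that is `m j > j - 1`, i.e. `m j = j`.
-/

noncomputable section

namespace Noncrossing132

open Finset
open scoped Classical

variable {n : ℕ}

section Rank

variable (r : Fin n → Fin n → Prop) [IsStrictTotalOrder (Fin n) r]

def rank (j : Fin n) : Fin n :=
  ⟨#{k | r k j}, (card_lt_card (filter_ssubset (p := (r · j)).2 ⟨j, mem_univ j, irrefl j⟩)).trans_eq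
      (card_fin n)⟩

variable {r}

lemma rank_lt_rank {k j : Fin n} (h : r k j) : rank r k < rank r j := by
  refine Fin.mk_lt_mk.2 (card_lt_card ((ssubset_iff_of_subset ?_).2 ⟨k, ?_, ?_⟩))
  · intro x hx
    simp only [mem_filter, mem_univ, true_and] at hx ⊢
    exact _root_.trans hx h
  · simpa using h
  · simpa using irrefl (r := r) k

lemma rank_lt_rank_iff {k j : Fin n} : rank r k < rank r j ↔ r k j := by
  refine ⟨fun h => ?_, rank_lt_rank⟩
  rcases trichotomous_of r k j with hkj | rfl | hjk
  · exact hkj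
  · exact absurd h (lt_irrefl _)
  · exact absurd (rank_lt_rank hjk) h.not_gt

lemma rank_injective : Function.Injective (rank r) := by
  intro k j h
  rcases trichotomous_of r k j with hkj | rfl | hjk
  · exact absurd h (rank_lt_rank hkj).ne
  · rfl
  · exact absurd h (rank_lt_rank hjk).ne'

variable (r) in
def rankPerm : Equiv.Perm (Fin n) :=
  Equiv.ofBijective (rank r) (Finite.injective_iff_bijective.1 rank_injective)

lemma card_filter_apply_lt_apply (p : Equiv.Perm (Fin n)) (j : Fin n) : #{k | p k < p j} = p j := by
  rw [card_equiv (t := {v | v < p j}) p (by simp), filter_gt_eq_Iio, Fin.card_Iio]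

lemma rankPerm_eq {p : Equiv.Perm (Fin n)} (h : ∀ k j, r k j ↔ p k < p j) : rankPerm r = p := by
  ext j
  simp only [rankPerm, Equiv.ofBijective_apply, rank, h, card_filter_apply_lt_apply]

lemma rankPerm_lt_rankPerm_iff {k j : Fin n} : rankPerm r k < rankPerm r j ↔ r k j :=
  rank_lt_rank_iff

end Rank

structure IsNCMinMap (m : Fin n → Fin n) : Prop where
  le_self : ∀ j, m j ≤ j
  idem : ∀ j, m (m j) = m j
  nested : ∀ ⦃i j⦄, i < j → m j ≤ i → m j ≤ m i

section Partition

variable {r : Setoid (Fin n)}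

variable (r) in
def blockMin (j : Fin n) : Fin n :=
  ({k | r.r j k} : Finset (Fin n)).min' ⟨j, by simp⟩

lemma rel_blockMin (j : Fin n) : r.r j (blockMin r j) :=
  (mem_filter.1 (min'_mem _ _)).2

lemma blockMin_le_of_rel {j k : Fin n} (h : r.r j k) : blockMin r j ≤ k :=
  min'_le _ _ (by simpa using h)

lemma blockMin_le (j : Fin n) : blockMin r j ≤ j :=
  blockMin_le_of_rel (r.refl' j)

lemma blockMin_eq_of_rel {i j : Fin n} (h : r.r i j) : blockMin r i = blockMin r j :=
  le_antisymm (blockMin_le_of_rel (r.trans' h (rel_blockMin j)))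
    (blockMin_le_of_rel (r.trans' (r.symm' h) (rel_blockMin i)))

lemma rel_iff_blockMin_eq {i j : Fin n} : r.r i j ↔ blockMin r i = blockMin r j :=
  ⟨blockMin_eq_of_rel, fun h => r.trans' (rel_blockMin i) (h ▸ r.symm' (rel_blockMin j))⟩

lemma blockMin_eq_self_iff {j : Fin n} : blockMin r j = j ↔ ∀ k, r.r j k → j ≤ k :=
  ⟨fun h _ hk => h ▸ blockMin_le_of_rel hk,
    fun h => le_antisymm (blockMin_le j) (h _ (rel_blockMin j))⟩

lemma isNCMinMap_blockMin (hr : IsNoncrossing r) : IsNCMinMap (blockMin r) where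
  le_self := blockMin_le
  idem j := blockMin_eq_of_rel (r.symm' (rel_blockMin j))
  nested i j hij hji := by
    by_contra! hlt
    have hij' : ¬ r.r i j := fun h => hlt.ne (blockMin_eq_of_rel h)
    rcases hji.lt_or_eq with hb | hb
    · refine hr ⟨_, _, i, j, hlt, hb, hij, r.symm' (rel_blockMin i), r.symm' (rel_blockMin j),
        fun hab => hij' ?_⟩
      exact r.trans' (rel_blockMin i) (r.trans' hab (r.symm' (rel_blockMin j)))
    · exact hij' (r.symm' (hb ▸ rel_blockMin j))

lemma ker_blockMin : Setoid.ker (blockMin r) = r :=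
  Setoid.ext fun _ _ => rel_iff_blockMin_eq.symm

variable {m : Fin n → Fin n}

lemma isNoncrossing_ker (hm : IsNCMinMap m) : IsNoncrossing (Setoid.ker m) := by
  rintro ⟨a, b, c, d, hab, hbc, hcd, hac, hbd, hnab⟩
  have hcb : m c ≤ m b := hm.nested hbc (hac ▸ (hm.le_self a).trans hab.le)
  have hdc : m d ≤ m c := hm.nested hcd (hbd ▸ (hm.le_self b).trans hbc.le)
  exact hnab (hac.trans (le_antisymm hcb (hbd ▸ hdc)))

lemma blockMin_ker (hm : IsNCMinMap m) : blockMin (Setoid.ker m) = m := by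
  funext j
  refine le_antisymm (blockMin_le_of_rel (hm.idem j).symm) ?_
  calc m j = m (blockMin (Setoid.ker m) j) := rel_blockMin (r := Setoid.ker m) j
    _ ≤ blockMin (Setoid.ker m) j := hm.le_self _

end Partition

def noncrossingEquivNCMinMap :
    {r : Setoid (Fin n) // IsNoncrossing r} ≃ {m : Fin n → Fin n // IsNCMinMap m} where
  toFun r := ⟨blockMin r.1, isNCMinMap_blockMin r.2⟩
  invFun m := ⟨Setoid.ker m.1, isNoncrossing_ker m.2⟩
  left_inv _ := Subtype.ext ker_blockMin
  right_inv m := Subtype.ext (blockMin_ker m.2)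

section Permutation

variable {m : Fin n → Fin n}

def Precedes (m : Fin n → Fin n) (k j : Fin n) : Prop :=
  k < j ∧ m j ≤ k ∨ j < k ∧ j < m k

lemma IsNCMinMap.precedes_trans (hm : IsNCMinMap m) {x y z : Fin n} :
    Precedes m x y → Precedes m y z → Precedes m x z := by
  have hyz := @hm.nested y z
  have hxy := @hm.nested x y
  have hzx := @hm.nested z x
  have hxz : x = z → m x = m z := congrArg m
  unfold Precedes
  omega

lemma IsNCMinMap.isStrictTotalOrder_precedes (hm : IsNCMinMap m) :
    IsStrictTotalOrder (Fin n) (Precedes m) where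
  trichotomous k j := by unfold Precedes; omega
  irrefl j := by simp [Precedes]
  trans _ _ _ := hm.precedes_trans

def permOf (m : Fin n → Fin n) (hm : IsNCMinMap m) : Equiv.Perm (Fin n) :=
  haveI := hm.isStrictTotalOrder_precedes
  rankPerm (Precedes m)

lemma permOf_lt_permOf_iff (hm : IsNCMinMap m) {k j : Fin n} :
    permOf m hm k < permOf m hm j ↔ Precedes m k j :=
  haveI := hm.isStrictTotalOrder_precedes
  rankPerm_lt_rankPerm_iff

lemma avoids132_permOf (hm : IsNCMinMap m) : Avoids132 (permOf m hm) := by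
  intro a b c hab hbc
  rw [permOf_lt_permOf_iff, permOf_lt_permOf_iff]
  unfold Precedes
  omega

lemma mem_Des_permOf_iff (hm : IsNCMinMap m) {i : ℕ} (h : 1 ≤ i ∧ i < n) :
    i ∈ Des (permOf m hm) ↔ m ⟨i, h.2⟩ = ⟨i, h.2⟩ := by
  have hle : (m ⟨i, h.2⟩ : ℕ) ≤ i := hm.le_self ⟨i, h.2⟩
  have hDes : i ∈ Des (permOf m hm) ↔ Precedes m ⟨i, h.2⟩ ⟨i - 1, by omega⟩ := by
    rw [← permOf_lt_permOf_iff hm]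
    exact ⟨fun ⟨_, hlt⟩ => hlt, fun hlt => ⟨h, hlt⟩⟩
  rw [hDes, Precedes, Fin.ext_iff]
  simp only [Fin.lt_def, Fin.le_def]
  omega

def runStart (p : Equiv.Perm (Fin n)) (j : Fin n) : Fin n :=
  ({i | ∀ k, i ≤ k → k ≤ j → p k ≤ p j} : Finset (Fin n)).min'
    ⟨j, mem_filter.2 ⟨mem_univ j, fun _ h₁ h₂ => le_antisymm h₂ h₁ ▸ le_rfl⟩⟩

variable {p : Equiv.Perm (Fin n)}

lemma runStart_le_of {i j : Fin n} (h : ∀ k, i ≤ k → k ≤ j → p k ≤ p j) : runStart p j ≤ i :=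
  min'_le _ _ (by simpa using h)

lemma apply_le_of_runStart_le {j k : Fin n} (h₁ : runStart p j ≤ k) (h₂ : k ≤ j) :
    p k ≤ p j := by
  have hmem : runStart p j ∈ ({i | ∀ k, i ≤ k → k ≤ j → p k ≤ p j} : Finset (Fin n)) :=
    min'_mem _ _
  exact (mem_filter.1 hmem).2 k h₁ h₂

lemma runStart_le (p : Equiv.Perm (Fin n)) (j : Fin n) : runStart p j ≤ j :=
  runStart_le_of fun _ h₁ h₂ => le_antisymm h₂ h₁ ▸ le_rfl

lemma runStart_le_runStart {i j : Fin n} (hji : runStart p j ≤ i) (hij : i ≤ j) :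
    runStart p j ≤ runStart p i := by
  refine runStart_le_of fun k hk hkj => ?_
  rcases le_or_gt k i with hki | hik
  · exact (apply_le_of_runStart_le hk hki).trans (apply_le_of_runStart_le hji hij)
  · exact apply_le_of_runStart_le (hji.trans hik.le) hkj

lemma isNCMinMap_runStart (p : Equiv.Perm (Fin n)) : IsNCMinMap (runStart p) where
  le_self := runStart_le p
  idem j := le_antisymm (runStart_le p _) (runStart_le_runStart le_rfl (runStart_le p j))
  nested _ _ hij hji := runStart_le_runStart hji hij.le

lemma apply_lt_apply_iff_runStart_le (hp : Avoids132 p) {k j : Fin n} (hkj : k < j) :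
    p k < p j ↔ runStart p j ≤ k := by
  refine ⟨fun hlt => ?_, fun hle =>
    (apply_le_of_runStart_le hle hkj.le).lt_of_ne (p.injective.ne hkj.ne)⟩
  by_contra! hk
  obtain ⟨l, hkl, hlj, hjl⟩ : ∃ l, k ≤ l ∧ l ≤ j ∧ p j < p l := by
    by_contra! h
    exact hk.not_ge (runStart_le_of h)
  have hkl' : k < l := hkl.lt_of_ne (by rintro rfl; exact hlt.not_gt hjl)
  have hlj' : l < j := hlj.lt_of_ne (by rintro rfl; exact hjl.false)
  exact hp k l j hkl' hlj' ⟨hlt, hjl⟩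

lemma precedes_runStart_iff (hp : Avoids132 p) {k j : Fin n} :
    Precedes (runStart p) k j ↔ p k < p j := by
  rcases lt_trichotomy k j with hkj | rfl | hjk
  · rw [apply_lt_apply_iff_runStart_le hp hkj, Precedes]
    omega
  · simp [Precedes]
  · have hlt : p k < p j ↔ ¬ p j < p k :=
      ⟨lt_asymm, fun h => (not_lt.1 h).lt_of_ne (p.injective.ne hjk.ne')⟩
    rw [hlt, apply_lt_apply_iff_runStart_le hp hjk, Precedes]
    omega

lemma runStart_permOf (hm : IsNCMinMap m) : runStart (permOf m hm) = m := by
  funext j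
  refine le_antisymm (runStart_le_of fun k hk hkj => ?_) ?_
  · rcases hkj.lt_or_eq with hkj | rfl
    · exact ((permOf_lt_permOf_iff hm).2 (Or.inl ⟨hkj, hk⟩)).le
    · exact le_rfl
  · by_contra! hlt
    have hj : runStart (permOf m hm) j < j := hlt.trans_le (hm.le_self j)
    have hp : permOf m hm (runStart (permOf m hm) j) < permOf m hm j :=
      (apply_le_of_runStart_le le_rfl hj.le).lt_of_ne ((permOf m hm).injective.ne hj.ne)
    rw [permOf_lt_permOf_iff, Precedes] at hp
    omega

lemma permOf_runStart (hp : Avoids132 p) : permOf (runStart p) (isNCMinMap_runStart p) = p :=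
  haveI := (isNCMinMap_runStart p).isStrictTotalOrder_precedes
  rankPerm_eq fun _ _ => precedes_runStart_iff hp

end Permutation

def ncMinMapEquivAvoids132 :
    {m : Fin n → Fin n // IsNCMinMap m} ≃ {p : Equiv.Perm (Fin n) // Avoids132 p} where
  toFun m := ⟨permOf m.1 m.2, avoids132_permOf m.2⟩
  invFun p := ⟨runStart p.1, isNCMinMap_runStart p.1⟩
  left_inv m := Subtype.ext (runStart_permOf m.2)
  right_inv p := Subtype.ext (permOf_runStart p.2)

end Noncrossing132

end

theorem stmt1_general (n : ℕ) :
    ∃ f : {r : Setoid (Fin n) // IsNoncrossing r} ≃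
          {p : Equiv.Perm (Fin n) // Avoids132 p},
      ∀ π : {r : Setoid (Fin n) // IsNoncrossing r},
        ∀ i : ℕ, (h : 1 ≤ i ∧ i < n) →
          (i ∈ Des (f π).1 ↔
            ∀ j : Fin n, π.1.r ⟨i, h.2⟩ j → (⟨i, h.2⟩ : Fin n) ≤ j) := by
  refine ⟨Noncrossing132.noncrossingEquivNCMinMap.trans Noncrossing132.ncMinMapEquivAvoids132,
    fun π _ h => ?_⟩
  exact (Noncrossing132.mem_Des_permOf_iff (Noncrossing132.isNCMinMap_blockMin π.2) h).trans
    Noncrossing132.blockMin_eq_self_iff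

/-- There is a bijection `f` from noncrossing partitions of `[n]` to
132-avoiding permutations of `[n]` such that for `1 ≤ i ≤ n-1`,
`i ∈ Des (f π)` iff the element `i+1` (represented 0-based by `⟨i, _⟩`)
is the smallest element of its block of `π`. -/
theorem stmt1 (n : ℕ) (hn : 1 ≤ n) :
    ∃ f : {r : Setoid (Fin n) // IsNoncrossing r} ≃
          {p : Equiv.Perm (Fin n) // Avoids132 p},
      ∀ π : {r : Setoid (Fin n) // IsNoncrossing r},
        ∀ i : ℕ, (h : 1 ≤ i ∧ i < n) →
          (i ∈ Des (f π).1 ↔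
            ∀ j : Fin n, π.1.r ⟨i, h.2⟩ j → (⟨i, h.2⟩ : Fin n) ≤ j) :=
  stmt1_general n
end

section
/- For every n ≥ 1 there exists a bijection φ from the set of noncrossing partitions of [n] onto the set of 132-avoiding permutations of [n] which is order-preserving from the refinement order to the descent-set order: whenever π ≤ τ in the refinement order on noncrossing partitions, Des(φ(π)) ⊆ Des(φ(τ)). (That is, the poset of 132-avoiding permutations of [n] ordered by containment of descent sets is an extension of the noncrossing partition lattice NC^A_n.) -/
/-!
Both families decompose around the element `N` of `[0, N]`. A 132-avoiding permutation with its
maximum at position `j` is `(A + (N - j)) N B` for 132-avoiding `A` of `[0, j)` and `B` of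
`[0, N - j)`, because everything left of the maximum must exceed everything right of it. A
noncrossing partition whose block of `N` has minimum `j` is a partition of `[0, j)` next to a
partition of `(j, N]` to whose last block `j` has been added, because no block can cross the one
of `N`. Under both decompositions the descent set, resp. the set of positions whose element is
not the largest of its block, is assembled from those of the parts in the same way (`spliceSet`),
so induction yields a bijection carrying the second set to the first. The set of non-maximal
positions can only grow when blocks are merged.
-/

open Function Set

lemma le_of_mapsTo_injOn_Iio {k m : ℕ} {f : ℕ → ℕ} (hf : MapsTo f (Iio k) (Iio m))
    (hinj : InjOn f (Iio k)) : k ≤ m := by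
  simpa using Finset.card_le_card_of_injOn (s := Finset.range k) (t := Finset.range m) f
    (by simpa [MapsTo] using hf) (by simpa using hinj)

section NatApply

variable {n : ℕ}

/-- `p` as a function on `ℕ` (junk value `0` outside `[0, n)`). -/
def natApply (p : Equiv.Perm (Fin n)) (a : ℕ) : ℕ :=
  if h : a < n then p ⟨a, h⟩ else 0

lemma natApply_of_lt (p : Equiv.Perm (Fin n)) {a : ℕ} (h : a < n) :
    natApply p a = p ⟨a, h⟩ :=
  dif_pos h

lemma mapsTo_natApply (p : Equiv.Perm (Fin n)) : MapsTo (natApply p) (Iio n) (Iio n) :=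
  fun a h => by rw [mem_Iio, natApply_of_lt p h]; exact Fin.isLt _

lemma injOn_natApply (p : Equiv.Perm (Fin n)) : InjOn (natApply p) (Iio n) := by
  intro a ha b hb h
  rw [natApply_of_lt p ha, natApply_of_lt p hb] at h
  exact congrArg Fin.val (p.injective (Fin.ext h))

lemma natApply_natApply_symm (p : Equiv.Perm (Fin n)) {a : ℕ} (h : a < n) :
    natApply p (natApply p.symm a) = a := by
  rw [natApply_of_lt p.symm h, natApply_of_lt p (Fin.isLt _)]
  simp

lemma Equiv.Perm.ext_natApply {p q : Equiv.Perm (Fin n)}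
    (h : ∀ a < n, natApply p a = natApply q a) : p = q := by
  ext x
  simpa only [natApply_of_lt _ x.isLt] using h x x.isLt

noncomputable def permOfNat (n : ℕ) (f : ℕ → ℕ) (hf : MapsTo f (Iio n) (Iio n))
    (hinj : InjOn f (Iio n)) : Equiv.Perm (Fin n) :=
  Equiv.ofBijective (fun x => ⟨f x, hf x.isLt⟩) <| Finite.injective_iff_bijective.mp
    fun x y h => Fin.ext (hinj x.isLt y.isLt (congrArg Fin.val h))

lemma natApply_permOfNat {f : ℕ → ℕ} (hf : MapsTo f (Iio n) (Iio n)) (hinj : InjOn f (Iio n))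
    {a : ℕ} (h : a < n) : natApply (permOfNat n f hf hinj) a = f a :=
  natApply_of_lt _ h

end NatApply

def Avoids132On (n : ℕ) (f : ℕ → ℕ) : Prop :=
  ∀ a b c, a < b → b < c → c < n → ¬ (f a < f c ∧ f c < f b)

/-- Positions are `1`-based, as in `Des`. -/
def desOn (n : ℕ) (f : ℕ → ℕ) : Set ℕ :=
  {i | 1 ≤ i ∧ i < n ∧ f i < f (i - 1)}

lemma avoids132_iff_avoids132On {n : ℕ} (p : Equiv.Perm (Fin n)) :
    Avoids132 p ↔ Avoids132On n (natApply p) := by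
  constructor
  · intro hp a b c hab hbc hc
    rw [natApply_of_lt p (by omega : a < n), natApply_of_lt p (by omega : b < n),
      natApply_of_lt p hc, ← Fin.lt_def, ← Fin.lt_def]
    exact hp _ _ _ (Fin.mk_lt_mk.mpr hab) (Fin.mk_lt_mk.mpr hbc)
  · intro hp a b c hab hbc
    have := hp a b c hab hbc c.isLt
    simpa only [natApply_of_lt p (Fin.isLt _), Fin.eta, ← Fin.lt_def] using this

lemma des_eq_desOn {n : ℕ} (p : Equiv.Perm (Fin n)) : Des p = desOn n (natApply p) := by
  ext i
  simp only [Des, desOn, mem_ofPred_eq]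
  constructor
  · rintro ⟨⟨h1, h2⟩, h⟩
    rw [natApply_of_lt p h2, natApply_of_lt p (by omega)]
    exact ⟨h1, h2, h⟩
  · rintro ⟨h1, h2, h⟩
    rw [natApply_of_lt p h2, natApply_of_lt p (by omega)] at h
    exact ⟨⟨h1, h2⟩, h⟩

/-- The common shape of the descent set of a spliced permutation and of the non-maximal positions
of a spliced partition. -/
def spliceSet (N j : ℕ) (S T : Set ℕ) : Set ℕ :=
  {i | i ∈ S ∨ (i = j + 1 ∧ j < N) ∨ ∃ i' ∈ T, i = j + 1 + i'}

def spliceFun (N j : ℕ) (f g : ℕ → ℕ) (a : ℕ) : ℕ :=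
  if a < j then N - j + f a else if a = j then N else g (a - j - 1)

section SpliceFun

variable {N j : ℕ} {f g : ℕ → ℕ}

lemma spliceFun_of_lt {a : ℕ} (h : a < j) : spliceFun N j f g a = N - j + f a :=
  if_pos h

lemma spliceFun_self : spliceFun N j f g j = N := by
  simp [spliceFun]

lemma spliceFun_of_gt {a : ℕ} (h : j < a) : spliceFun N j f g a = g (a - j - 1) := by
  simp [spliceFun, Nat.not_lt.mpr h.le, h.ne']

lemma spliceFun_congr {f' g' : ℕ → ℕ} (hf : EqOn f f' (Iio j)) (hg : EqOn g g' (Iio (N - j)))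
    {a : ℕ} (ha : a < N + 1) : spliceFun N j f g a = spliceFun N j f' g' a := by
  unfold spliceFun
  split_ifs with h1 h2
  · rw [hf h1]
  · rfl
  · rw [hg (show a - j - 1 < N - j by omega)]

variable (hj : j ≤ N) (hf : MapsTo f (Iio j) (Iio j)) (hg : MapsTo g (Iio (N - j)) (Iio (N - j)))
include hj hf hg

lemma mapsTo_spliceFun : MapsTo (spliceFun N j f g) (Iio (N + 1)) (Iio (N + 1)) := by
  intro a (ha : a < N + 1)
  show spliceFun N j f g a < N + 1
  unfold spliceFun
  split_ifs with h1 h2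
  · have : f a < j := hf h1; omega
  · omega
  · have : g (a - j - 1) < N - j := hg (show a - j - 1 < N - j by omega); omega

lemma injOn_spliceFun (hfi : InjOn f (Iio j)) (hgi : InjOn g (Iio (N - j))) :
    InjOn (spliceFun N j f g) (Iio (N + 1)) := by
  intro a (ha : a < N + 1) b (hb : b < N + 1) h
  have hfa : a < j → f a < j := fun h => hf h
  have hfb : b < j → f b < j := fun h => hf h
  have hga : j < a → g (a - j - 1) < N - j := fun h => hg (show a - j - 1 < N - j by omega)
  have hgb : j < b → g (b - j - 1) < N - j := fun h => hg (show b - j - 1 < N - j by omega)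
  unfold spliceFun at h
  split_ifs at h
  all_goals first
    | omega
    | exact hfi (mem_Iio.mpr ‹_›) (mem_Iio.mpr ‹_›) (by omega)
    | have := hgi (show a - j - 1 < N - j by omega) (show b - j - 1 < N - j by omega) h; omega

lemma avoids132On_spliceFun (hA : Avoids132On j f) (hB : Avoids132On (N - j) g) :
    Avoids132On (N + 1) (spliceFun N j f g) := by
  intro a b c hab hbc hc
  rcases lt_trichotomy c j with hcj | rfl | hjc
  · rw [spliceFun_of_lt (hab.trans (hbc.trans hcj)), spliceFun_of_lt (hbc.trans hcj),
      spliceFun_of_lt hcj]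
    have := hA a b c hab hbc hcj
    omega
  · have : f b < c := hf hbc
    rw [spliceFun_self, spliceFun_of_lt hbc]
    omega
  · have hgc : g (c - j - 1) < N - j := hg (show c - j - 1 < N - j by omega)
    rw [spliceFun_of_gt hjc]
    rcases lt_trichotomy a j with haj | rfl | hja
    · rw [spliceFun_of_lt haj]; omega
    · rw [spliceFun_self]; omega
    · rw [spliceFun_of_gt hja, spliceFun_of_gt (hja.trans hab)]
      exact hB _ _ _ (by omega) (by omega) (by omega)

lemma desOn_spliceFun :
    desOn (N + 1) (spliceFun N j f g) = spliceSet N j (desOn j f) (desOn (N - j) g) := by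
  ext i
  simp only [desOn, spliceSet, mem_ofPred_eq]
  rcases lt_trichotomy i j with hij | rfl | hji
  · rw [spliceFun_of_lt hij, spliceFun_of_lt (by omega : i - 1 < j)]
    constructor
    · rintro ⟨h1, -, h⟩; exact Or.inl ⟨h1, hij, by omega⟩
    · rintro (⟨h1, -, h⟩ | ⟨rfl, -⟩ | ⟨i', -, rfl⟩) <;> omega
  · constructor
    · rintro ⟨h1, -, h⟩
      have : f (i - 1) < i := hf (show i - 1 < i by omega)
      rw [spliceFun_self, spliceFun_of_lt (by omega)] at h
      omega
    · rintro (⟨-, h, -⟩ | ⟨h, -⟩ | ⟨i', -, h⟩) <;> omega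
  · rcases (show i = j + 1 ∨ j + 1 < i by omega) with rfl | hji'
    · rw [spliceFun_of_gt hji, Nat.add_sub_cancel, spliceFun_self]
      constructor
      · rintro ⟨-, h2, -⟩; exact Or.inr (Or.inl ⟨rfl, by omega⟩)
      · rintro (⟨-, h, -⟩ | ⟨-, h⟩ | ⟨i', ⟨h1, -⟩, h⟩)
        · omega
        · have : g 0 < N - j := hg (show 0 < N - j by omega)
          refine ⟨by omega, by omega, ?_⟩
          simp only [Nat.add_sub_cancel_left, Nat.sub_self]
          omega
        · omega
    · rw [spliceFun_of_gt hji, spliceFun_of_gt (by omega : j < i - 1)]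
      constructor
      · rintro ⟨-, h2, h⟩
        refine Or.inr (Or.inr ⟨i - j - 1, ⟨by omega, by omega, ?_⟩, by omega⟩)
        rwa [show i - j - 1 - 1 = i - 1 - j - 1 by omega]
      · rintro (⟨-, h, -⟩ | ⟨h, -⟩ | ⟨i', ⟨h1, h2, h⟩, rfl⟩)
        · omega
        · omega
        · refine ⟨by omega, by omega, ?_⟩
          rwa [show j + 1 + i' - 1 - j - 1 = i' - 1 by omega, show j + 1 + i' - j - 1 = i' by omega]

end SpliceFun

lemma lt_of_ne_max {N j a : ℕ} {f : ℕ → ℕ} (hf : MapsTo f (Iio (N + 1)) (Iio (N + 1)))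
    (hinj : InjOn f (Iio (N + 1))) (hj : j ≤ N) (hfj : f j = N) (ha : a < N + 1) (haj : a ≠ j) :
    f a < N := by
  have : f a < N + 1 := hf ha
  have : f a ≠ f j := fun h => haj (hinj ha (show j < N + 1 by omega) h)
  omega

namespace Avoids132On

variable {N j : ℕ} {f : ℕ → ℕ} (hA : Avoids132On (N + 1) f)
  (hf : MapsTo f (Iio (N + 1)) (Iio (N + 1))) (hinj : InjOn f (Iio (N + 1)))
  (hj : j ≤ N) (hfj : f j = N)
include hA hf hinj hj hfj

lemma right_lt_left {a b : ℕ} (ha : a ≤ j) (hb : j < b) (hbN : b ≤ N) : f b < f a := by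
  have hfb := lt_of_ne_max hf hinj hj hfj (show b < N + 1 by omega) hb.ne'
  rcases ha.lt_or_eq with ha | rfl
  · have := hA a j b ha hb (by omega)
    have : f a ≠ f b := fun h => by
      have := hinj (show a < N + 1 by omega) (show b < N + 1 by omega) h; omega
    omega
  · omega

lemma right_lt {b : ℕ} (hb : j < b) (hbN : b ≤ N) : f b < N - j := by
  have key : j + 1 ≤ N - f b := by
    refine le_of_mapsTo_injOn_Iio (f := fun a => f a - f b - 1) (fun a (ha : a < j + 1) => ?_)
      fun a (ha : a < j + 1) a' (ha' : a' < j + 1) h => ?_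
    · have : f a < N + 1 := hf (show a < N + 1 by omega)
      have := right_lt_left hA hf hinj hj hfj (by omega : a ≤ j) hb hbN
      show f a - f b - 1 < N - f b
      omega
    · have := right_lt_left hA hf hinj hj hfj (by omega : a ≤ j) hb hbN
      have := right_lt_left hA hf hinj hj hfj (by omega : a' ≤ j) hb hbN
      exact hinj (show a < N + 1 by omega) (show a' < N + 1 by omega) (by simp only at h; omega)
  omega

lemma sub_le_left {a : ℕ} (ha : a < j) : N - j ≤ f a := by
  refine le_of_mapsTo_injOn_Iio (f := fun b => f (j + 1 + b)) (fun b (hb : b < N - j) => ?_)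
    fun b (hb : b < N - j) b' (hb' : b' < N - j) h => ?_
  · exact right_lt_left hA hf hinj hj hfj ha.le (by omega) (by omega)
  · have := hinj (show j + 1 + b < N + 1 by omega) (show j + 1 + b' < N + 1 by omega) h
    omega

lemma mapsTo_left : MapsTo (fun a => f a - (N - j)) (Iio j) (Iio j) := fun a (ha : a < j) => by
  have := sub_le_left hA hf hinj hj hfj ha
  have := lt_of_ne_max hf hinj hj hfj (show a < N + 1 by omega) ha.ne
  show f a - (N - j) < j
  omega

lemma injOn_left : InjOn (fun a => f a - (N - j)) (Iio j) :=
    fun a (ha : a < j) b (hb : b < j) h => by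
  have := sub_le_left hA hf hinj hj hfj ha
  have := sub_le_left hA hf hinj hj hfj hb
  exact hinj (show a < N + 1 by omega) (show b < N + 1 by omega) (by simp only at h; omega)

lemma avoids132On_left : Avoids132On j (fun a => f a - (N - j)) := by
  intro a b c hab hbc hc
  have := sub_le_left hA hf hinj hj hfj (hab.trans (hbc.trans hc))
  have := sub_le_left hA hf hinj hj hfj (hbc.trans hc)
  have := sub_le_left hA hf hinj hj hfj hc
  have := hA a b c hab hbc (by omega)
  dsimp only
  omega

lemma mapsTo_right : MapsTo (fun b => f (j + 1 + b)) (Iio (N - j)) (Iio (N - j)) :=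
  fun b (hb : b < N - j) => right_lt hA hf hinj hj hfj (by omega) (by omega)

omit hf hinj hfj in
lemma avoids132On_right : Avoids132On (N - j) (fun b => f (j + 1 + b)) :=
  fun a b c hab hbc hc => hA _ _ _ (by omega) (by omega) (by omega)

lemma spliceFun_left_right (a : ℕ) :
    spliceFun N j (fun a => f a - (N - j)) (fun b => f (j + 1 + b)) a = f a := by
  rcases lt_trichotomy a j with haj | rfl | hja
  · have := sub_le_left hA hf hinj hj hfj haj
    rw [spliceFun_of_lt haj]
    omega
  · rw [spliceFun_self, hfj]
  · rw [spliceFun_of_gt hja, show j + 1 + (a - j - 1) = a by omega]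

end Avoids132On

lemma avoids132_permOfNat {n : ℕ} {f : ℕ → ℕ} (hf : MapsTo f (Iio n) (Iio n))
    (hinj : InjOn f (Iio n)) : Avoids132 (permOfNat n f hf hinj) ↔ Avoids132On n f := by
  rw [avoids132_iff_avoids132On]
  refine forall_congr' fun a => forall_congr' fun b => forall_congr' fun c => ?_
  refine imp_congr_right fun hab => imp_congr_right fun hbc => imp_congr_right fun hc => ?_
  rw [natApply_permOfNat hf hinj (show a < n by omega),
    natApply_permOfNat hf hinj (show b < n by omega), natApply_permOfNat hf hinj hc]

lemma des_permOfNat {n : ℕ} {f : ℕ → ℕ} (hf : MapsTo f (Iio n) (Iio n))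
    (hinj : InjOn f (Iio n)) : Des (permOfNat n f hf hinj) = desOn n f := by
  ext i
  rw [des_eq_desOn]
  simp only [desOn, mem_ofPred_eq]
  refine and_congr_right fun hi => and_congr_right fun hin => ?_
  rw [natApply_permOfNat hf hinj hin, natApply_permOfNat hf hinj (by omega)]

abbrev Av132Perm (n : ℕ) := {p : Equiv.Perm (Fin n) // Avoids132 p}

section SplicePerm

variable {N j : ℕ} (A : Equiv.Perm (Fin j)) (B : Equiv.Perm (Fin (N - j))) (hj : j ≤ N)

/-- The permutation `(A + (N - j)) N B` in one-line notation. -/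
noncomputable def splicePerm : Equiv.Perm (Fin (N + 1)) :=
  permOfNat (N + 1) (spliceFun N j (natApply A) (natApply B))
    (mapsTo_spliceFun hj (mapsTo_natApply A) (mapsTo_natApply B))
    (injOn_spliceFun hj (mapsTo_natApply A) (mapsTo_natApply B) (injOn_natApply A)
      (injOn_natApply B))

lemma natApply_splicePerm {a : ℕ} (ha : a < N + 1) :
    natApply (splicePerm A B hj) a = spliceFun N j (natApply A) (natApply B) a :=
  natApply_permOfNat _ _ ha

variable {A B} in
lemma avoids132_splicePerm (hA : Avoids132 A) (hB : Avoids132 B) :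
    Avoids132 (splicePerm A B hj) := by
  rw [avoids132_iff_avoids132On] at hA hB
  exact (avoids132_permOfNat _ _).mpr
    (avoids132On_spliceFun hj (mapsTo_natApply A) (mapsTo_natApply B) hA hB)

lemma des_splicePerm : Des (splicePerm A B hj) = spliceSet N j (Des A) (Des B) := by
  rw [splicePerm, des_permOfNat, desOn_spliceFun hj (mapsTo_natApply A) (mapsTo_natApply B),
    des_eq_desOn, des_eq_desOn]

end SplicePerm

namespace Av132Perm

variable {N : ℕ}

noncomputable def splice (s : Σ j : Fin (N + 1), Av132Perm j × Av132Perm (N - j)) :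
    Av132Perm (N + 1) :=
  ⟨splicePerm s.2.1.1 s.2.2.1 (Nat.le_of_lt_succ s.1.isLt),
    avoids132_splicePerm _ s.2.1.2 s.2.2.2⟩

lemma splice_injective : Injective (splice (N := N)) := by
  rintro ⟨j, ⟨A, hA⟩, ⟨B, hB⟩⟩ ⟨j', ⟨A', hA'⟩, ⟨B', hB'⟩⟩ h
  have hj := Nat.le_of_lt_succ j.isLt
  have hj' := Nat.le_of_lt_succ j'.isLt
  have h (a : ℕ) (ha : a < N + 1) : spliceFun N j (natApply A) (natApply B) a =
      spliceFun N j' (natApply A') (natApply B') a := by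
    rw [← natApply_splicePerm _ _ hj ha, ← natApply_splicePerm _ _ hj' ha]
    exact congrArg (fun p : Av132Perm (N + 1) => natApply p.1 a) h
  obtain rfl : j = j' := by
    refine Fin.ext (injOn_natApply (splicePerm A B hj) j.isLt j'.isLt ?_)
    rw [natApply_splicePerm _ _ _ j.isLt, natApply_splicePerm _ _ _ j'.isLt, h _ j'.isLt,
      spliceFun_self, spliceFun_self]
  obtain rfl : A = A' := Equiv.Perm.ext_natApply fun a ha => by
    have := h a (by omega)
    rwa [spliceFun_of_lt ha, spliceFun_of_lt ha, Nat.add_left_cancel_iff] at this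
  obtain rfl : B = B' := Equiv.Perm.ext_natApply fun b hb => by
    have := h (j + 1 + b) (by omega)
    rwa [spliceFun_of_gt (by omega), spliceFun_of_gt (by omega),
      show j + 1 + b - j - 1 = b by omega] at this
  rfl

lemma splice_surjective : Surjective (splice (N := N)) := by
  rintro ⟨p, hp⟩
  rw [avoids132_iff_avoids132On] at hp
  set j := natApply p.symm N
  have hj : j ≤ N := Nat.le_of_lt_succ (mapsTo_natApply p.symm (show N < N + 1 by omega))
  have hfj : natApply p j = N := natApply_natApply_symm p (by omega)
  have hf := mapsTo_natApply p
  have hinj := injOn_natApply p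
  let A := permOfNat j _ (hp.mapsTo_left hf hinj hj hfj) (hp.injOn_left hf hinj hj hfj)
  let B := permOfNat (N - j) _ (hp.mapsTo_right hf hinj hj hfj)
    (hinj.comp (add_right_injective (j + 1)).injOn fun b (hb : b < N - j) =>
      show j + 1 + b < N + 1 by omega)
  refine ⟨⟨⟨j, by omega⟩,
    ⟨A, (avoids132_permOfNat _ _).mpr (hp.avoids132On_left hf hinj hj hfj)⟩,
    ⟨B, (avoids132_permOfNat _ _).mpr (hp.avoids132On_right hj)⟩⟩,
    Subtype.ext (Equiv.Perm.ext_natApply fun a ha => ?_)⟩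
  rw [splice, natApply_splicePerm _ _ _ ha,
    spliceFun_congr (fun a ha => natApply_permOfNat _ _ ha)
      (fun b hb => natApply_permOfNat _ _ hb) ha,
    hp.spliceFun_left_right hf hinj hj hfj]

noncomputable def spliceEquiv (N : ℕ) :
    (Σ j : Fin (N + 1), Av132Perm j × Av132Perm (N - j)) ≃ Av132Perm (N + 1) :=
  Equiv.ofBijective splice ⟨splice_injective, splice_surjective⟩

lemma des_spliceEquiv (s : Σ j : Fin (N + 1), Av132Perm j × Av132Perm (N - j)) :
    Des (spliceEquiv N s).1 = spliceSet N s.1 (Des s.2.1.1) (Des s.2.2.1) :=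
  des_splicePerm _ _ (Nat.le_of_lt_succ s.1.isLt)

end Av132Perm

section NatRel

variable {n : ℕ}

/-- `r` as a relation on `ℕ`, false outside `[0, n)`. -/
def natRel (r : Setoid (Fin n)) (a b : ℕ) : Prop :=
  ∃ (ha : a < n) (hb : b < n), r ⟨a, ha⟩ ⟨b, hb⟩

variable {r s : Setoid (Fin n)} {a b c : ℕ}

lemma natRel.lt_left (h : natRel r a b) : a < n := h.1

lemma natRel.lt_right (h : natRel r a b) : b < n := h.2.1

lemma natRel_refl (h : a < n) : natRel r a a := ⟨h, h, r.refl' _⟩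

lemma natRel.symm (h : natRel r a b) : natRel r b a :=
  let ⟨ha, hb, h⟩ := h; ⟨hb, ha, r.symm' h⟩

lemma natRel.trans (h : natRel r a b) (h' : natRel r b c) : natRel r a c :=
  let ⟨ha, _, h⟩ := h; let ⟨_, hc, h'⟩ := h'; ⟨ha, hc, r.trans' h h'⟩

lemma natRel_mono (hrs : r ≤ s) (h : natRel r a b) : natRel s a b :=
  let ⟨ha, hb, h⟩ := h; ⟨ha, hb, hrs h⟩

lemma Setoid.ext_natRel (h : ∀ a b, natRel r a b ↔ natRel s a b) : r = s :=
  Setoid.ext fun x y => by simpa [natRel] using h x y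

lemma isNoncrossing_iff_natRel : IsNoncrossing r ↔
    ∀ a b c d, a < b → b < c → c < d → natRel r a c → natRel r b d → natRel r a b := by
  constructor
  · rintro hr a b c d hab hbc hcd ⟨ha, hc, hac⟩ ⟨hb, hd, hbd⟩
    by_contra hab'
    exact hr ⟨_, _, _, _, Fin.mk_lt_mk.mpr hab, Fin.mk_lt_mk.mpr hbc, Fin.mk_lt_mk.mpr hcd,
      hac, hbd, fun h => hab' ⟨ha, hb, h⟩⟩
  · rintro hr ⟨a, b, c, d, hab, hbc, hcd, hac, hbd, hab'⟩
    exact hab' (hr a b c d hab hbc hcd ⟨a.isLt, c.isLt, hac⟩ ⟨b.isLt, d.isLt, hbd⟩).2.2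

lemma natRel_comap {m k : ℕ} {e : Fin m → Fin n} (he : ∀ x, (e x : ℕ) = k + x) :
    natRel (r.comap e) a b ↔ a < m ∧ b < m ∧ natRel r (k + a) (k + b) := by
  have hval (x : Fin m) : k + x < n := he x ▸ (e x).isLt
  have heq (x : Fin m) : e x = ⟨k + x, hval x⟩ := Fin.ext (he x)
  constructor
  · rintro ⟨ha, hb, h⟩
    refine ⟨ha, hb, hval ⟨a, ha⟩, hval ⟨b, hb⟩, ?_⟩
    simpa only [Setoid.comap_rel, heq] using h
  · rintro ⟨ha, hb, _, _, h⟩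
    exact ⟨ha, hb, by simpa only [Setoid.comap_rel, heq] using h⟩

lemma IsNoncrossing.comap {m : ℕ} {e : Fin m → Fin n} (he : StrictMono e)
    (hr : IsNoncrossing r) : IsNoncrossing (r.comap e) := by
  rintro ⟨a, b, c, d, hab, hbc, hcd, h⟩
  exact hr ⟨e a, e b, e c, e d, he hab, he hbc, he hcd, h⟩

end NatRel

/-- The `1`-based positions `i` whose element (`i - 1` in `Fin n`) is not the largest of its
block. -/
def nonmaxPositions {n : ℕ} (r : Setoid (Fin n)) : Set ℕ :=
  {i | 1 ≤ i ∧ ∃ y, i - 1 < y ∧ natRel r (i - 1) y}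

lemma nonmaxPositions_mono {n : ℕ} {r s : Setoid (Fin n)} (h : r ≤ s) :
    nonmaxPositions r ⊆ nonmaxPositions s :=
  fun _ ⟨hi, y, hy, hr⟩ => ⟨hi, y, hy, natRel_mono h hr⟩

abbrev NCPartition (n : ℕ) := {r : Setoid (Fin n) // IsNoncrossing r}

/-- The block labels of `spliceSetoid`: blocks of `rA` on `[0, j)` and of `rB` shifted to
`(j, N]`, with `j` joining the block of `N`. -/
def spliceClass (N j : ℕ) (rA : Setoid (Fin j)) (rB : Setoid (Fin (N - j))) (x : Fin (N + 1)) :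
    Quotient rA ⊕ Option (Quotient rB) :=
  if hx : x.val < j then .inl ⟦⟨x, hx⟩⟧
  else if hx' : j < x.val then .inr (some ⟦⟨x - j - 1, by omega⟩⟧)
  else if hN : j < N then .inr (some ⟦⟨N - j - 1, by omega⟩⟧) else .inr none

def spliceSetoid (N j : ℕ) (rA : Setoid (Fin j)) (rB : Setoid (Fin (N - j))) :
    Setoid (Fin (N + 1)) :=
  Setoid.ker (spliceClass N j rA rB)

section SpliceSetoid

variable {N j : ℕ} (rA : Setoid (Fin j)) (rB : Setoid (Fin (N - j)))

lemma spliceClass_add {b : ℕ} (hb : j + 1 + b < N + 1) :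
    spliceClass N j rA rB ⟨j + 1 + b, hb⟩ = .inr (some ⟦⟨b, by omega⟩⟧) := by
  simp only [spliceClass, dif_neg (show ¬ j + 1 + b < j by omega),
    dif_pos (show j < j + 1 + b by omega)]
  congr 4
  omega

lemma spliceClass_pivot (hN : j < N) :
    spliceClass N j rA rB ⟨j, by omega⟩ = .inr (some ⟦⟨N - j - 1, by omega⟩⟧) := by
  simp only [spliceClass, lt_irrefl, dif_pos hN, dite_false]

lemma natRel_spliceSetoid_iff {a b : ℕ} :
    natRel (spliceSetoid N j rA rB) a b ↔ ∃ (ha : a < N + 1) (hb : b < N + 1),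
      spliceClass N j rA rB ⟨a, ha⟩ = spliceClass N j rA rB ⟨b, hb⟩ :=
  Iff.rfl

lemma natRel_spliceSetoid_of_lt (hj : j ≤ N) {a b : ℕ} (ha : a < j) :
    natRel (spliceSetoid N j rA rB) a b ↔ b < j ∧ natRel rA a b := by
  rw [natRel_spliceSetoid_iff]
  by_cases hb : b < j
  · simp only [spliceClass, dif_pos ha, dif_pos hb, Sum.inl.injEq, Quotient.eq, natRel]
    exact ⟨fun ⟨_, _, h⟩ => ⟨hb, ha, hb, h⟩,
      fun ⟨_, _, _, h⟩ => ⟨by omega, by omega, h⟩⟩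
  · simp only [hb, false_and, iff_false]
    rintro ⟨_, _, h⟩
    simp only [spliceClass, dif_pos ha, dif_neg hb] at h
    split_ifs at h

lemma natRel_spliceSetoid_add {a b : ℕ} :
    natRel (spliceSetoid N j rA rB) (j + 1 + a) (j + 1 + b) ↔ natRel rB a b := by
  rw [natRel_spliceSetoid_iff]
  simp only [spliceClass_add, Sum.inr.injEq, Option.some.injEq, Quotient.eq, natRel]
  exact ⟨fun ⟨_, _, h⟩ => ⟨by omega, by omega, h⟩,
    fun ⟨_, _, h⟩ => ⟨by omega, by omega, h⟩⟩

lemma natRel_spliceSetoid_pivot {b : ℕ} :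
    natRel (spliceSetoid N j rA rB) j (j + 1 + b) ↔ natRel rB (N - j - 1) b := by
  rw [natRel_spliceSetoid_iff]
  constructor
  · rintro ⟨_, hb, h⟩
    rw [spliceClass_add, spliceClass_pivot _ _ (by omega)] at h
    simp only [Sum.inr.injEq, Option.some.injEq, Quotient.eq] at h
    exact ⟨by omega, by omega, h⟩
  · rintro ⟨_, hb, h⟩
    refine ⟨by omega, by omega, ?_⟩
    rw [spliceClass_add, spliceClass_pivot _ _ (by omega)]
    simpa only [Sum.inr.injEq, Option.some.injEq, Quotient.eq] using h

lemma natRel_spliceSetoid_pivot_last (hj : j ≤ N) : natRel (spliceSetoid N j rA rB) j N := by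
  rcases hj.lt_or_eq with hj | rfl
  · simpa [show j + 1 + (N - j - 1) = N by omega] using
      (natRel_spliceSetoid_pivot rA rB (b := N - j - 1)).mpr (natRel_refl (by omega))
  · exact natRel_refl (by omega)

lemma natRel_iff_natRel_spliceSetoid (hj : j ≤ N) {a b : ℕ} :
    natRel rA a b ↔ a < j ∧ natRel (spliceSetoid N j rA rB) a b := by
  by_cases ha : a < j
  · rw [natRel_spliceSetoid_of_lt rA rB hj ha]
    exact ⟨fun h => ⟨ha, h.lt_right, h⟩, fun h => h.2.2⟩
  · exact iff_of_false (fun h => ha h.lt_left) (fun h => ha h.1)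

lemma isNoncrossing_spliceSetoid (hj : j ≤ N) (hA : IsNoncrossing rA) (hB : IsNoncrossing rB) :
    IsNoncrossing (spliceSetoid N j rA rB) := by
  rw [isNoncrossing_iff_natRel] at hA hB ⊢
  intro a b c d hab hbc hcd hac hbd
  rcases lt_or_ge a j with ha | ha
  · obtain ⟨hc, hac⟩ := (natRel_spliceSetoid_of_lt rA rB hj ha).mp hac
    obtain ⟨hd, hbd⟩ := (natRel_spliceSetoid_of_lt rA rB hj (show b < j by omega)).mp hbd
    exact (natRel_spliceSetoid_of_lt rA rB hj ha).mpr ⟨by omega, hA a b c d hab hbc hcd hac hbd⟩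
  obtain ⟨b, rfl⟩ : ∃ b', b = j + 1 + b' := ⟨b - j - 1, by omega⟩
  obtain ⟨c, rfl⟩ : ∃ c', c = j + 1 + c' := ⟨c - j - 1, by omega⟩
  obtain ⟨d, rfl⟩ : ∃ d', d = j + 1 + d' := ⟨d - j - 1, by omega⟩
  rw [natRel_spliceSetoid_add] at hbd
  rcases ha.lt_or_eq with ha | ha
  · obtain ⟨a, rfl⟩ : ∃ a', a = j + 1 + a' := ⟨a - j - 1, by omega⟩
    rw [natRel_spliceSetoid_add] at hac ⊢
    exact hB a b c d (by omega) (by omega) (by omega) hac hbd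
  rw [← ha, natRel_spliceSetoid_pivot] at hac ⊢
  rcases (show d = N - j - 1 ∨ d < N - j - 1 by have := hbd.lt_right; omega) with rfl | hd
  · exact hbd.symm
  · -- `b, c, d, N` would cross unless `b` and `c` share a block
    exact hac.trans (hB b c d (N - j - 1) (by omega) (by omega) hd hbd hac.symm).symm

lemma nonmaxPositions_spliceSetoid (hj : j ≤ N) :
    nonmaxPositions (spliceSetoid N j rA rB) =
      spliceSet N j (nonmaxPositions rA) (nonmaxPositions rB) := by
  ext i
  simp only [nonmaxPositions, spliceSet, mem_ofPred_eq]
  rcases lt_trichotomy (i - 1) j with hi | hi | hi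
  · simp_rw [natRel_spliceSetoid_of_lt rA rB hj hi]
    constructor
    · rintro ⟨h1, y, hy, -, hr⟩
      exact Or.inl ⟨h1, y, hy, hr⟩
    · rintro (⟨h1, y, hy, hr⟩ | ⟨rfl, -⟩ | ⟨i', -, rfl⟩)
      · exact ⟨h1, y, hy, hr.lt_right, hr⟩
      · omega
      · omega
  · rw [hi]
    constructor
    · rintro ⟨h1, y, hy, hr⟩
      exact Or.inr (Or.inl ⟨by omega, by have := hr.lt_right; omega⟩)
    · rintro (⟨-, y, hy, hr⟩ | ⟨rfl, hN⟩ | ⟨i', ⟨hi', -⟩, rfl⟩)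
      · have := hr.lt_left; omega
      · exact ⟨by omega, N, by omega, natRel_spliceSetoid_pivot_last rA rB hj⟩
      · omega
  · obtain ⟨k, hk⟩ : ∃ k, i - 1 = j + 1 + k := ⟨i - 1 - j - 1, by omega⟩
    rw [hk]
    constructor
    · rintro ⟨h1, y, hy, hr⟩
      obtain ⟨y, rfl⟩ : ∃ y', y = j + 1 + y' := ⟨y - j - 1, by omega⟩
      rw [natRel_spliceSetoid_add] at hr
      exact Or.inr (Or.inr ⟨k + 1, ⟨by omega, y, by omega, by simpa using hr⟩, by omega⟩)
    · rintro (⟨-, y, hy, hr⟩ | ⟨rfl, -⟩ | ⟨i', ⟨-, y, hy, hr⟩, rfl⟩)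
      · have := hr.lt_left; omega
      · omega
      · refine ⟨by omega, j + 1 + y, by omega, ?_⟩
        rw [natRel_spliceSetoid_add]
        convert hr using 2
        omega

end SpliceSetoid

section LastBlock

variable {N : ℕ} (r : Setoid (Fin (N + 1)))

open Classical in
noncomputable def lastBlockMin : ℕ :=
  Nat.find (⟨N, natRel_refl (Nat.lt_succ_self N)⟩ : ∃ k, natRel r k N)

lemma natRel_lastBlockMin : natRel r (lastBlockMin r) N := by
  classical exact Nat.find_spec (⟨N, natRel_refl (Nat.lt_succ_self N)⟩ : ∃ k, natRel r k N)

lemma lastBlockMin_le_of_natRel {k : ℕ} (h : natRel r k N) : lastBlockMin r ≤ k := by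
  classical exact Nat.find_min' _ h

lemma lastBlockMin_le : lastBlockMin r ≤ N :=
  lastBlockMin_le_of_natRel r (natRel_refl (Nat.lt_succ_self N))

variable {r}

lemma IsNoncrossing.not_natRel_of_lt_lastBlockMin (hr : IsNoncrossing r) {a b : ℕ}
    (ha : a < lastBlockMin r) (hb : lastBlockMin r ≤ b) : ¬ natRel r a b := by
  intro hab
  have hmin {k : ℕ} (h : natRel r k N) : lastBlockMin r ≤ k := lastBlockMin_le_of_natRel r h
  by_cases hbN : natRel r b N
  · exact absurd (hmin (hab.trans hbN)) (by omega)
  have hmb : lastBlockMin r < b := by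
    rcases hb.lt_or_eq with hb | rfl
    · exact hb
    · exact absurd (natRel_lastBlockMin r) hbN
  have hbN' : b < N := by
    rcases (Nat.lt_succ_iff.mp hab.lt_right).lt_or_eq with h | rfl
    · exact h
    · exact absurd (natRel_refl (Nat.lt_succ_self _)) hbN
  have hma := (isNoncrossing_iff_natRel.mp hr) a _ b N ha hmb hbN' hab (natRel_lastBlockMin r)
  exact absurd (hmin (hma.trans (natRel_lastBlockMin r))) (by omega)

variable (r)

noncomputable def leftSetoid : Setoid (Fin (lastBlockMin r)) :=
  r.comap (Fin.castLE (by have := lastBlockMin_le r; omega))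

noncomputable def rightSetoid : Setoid (Fin (N - lastBlockMin r)) :=
  r.comap fun b => ⟨lastBlockMin r + 1 + b, by omega⟩

lemma natRel_leftSetoid {a b : ℕ} :
    natRel (leftSetoid r) a b ↔ a < lastBlockMin r ∧ b < lastBlockMin r ∧ natRel r a b := by
  rw [leftSetoid]
  simpa using natRel_comap (r := r) (k := 0) (a := a) (b := b) (fun x => by simp)

lemma natRel_rightSetoid {a b : ℕ} : natRel (rightSetoid r) a b ↔
    natRel r (lastBlockMin r + 1 + a) (lastBlockMin r + 1 + b) := by
  rw [rightSetoid, natRel_comap (k := lastBlockMin r + 1) fun _ => rfl]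
  exact ⟨fun h => h.2.2,
    fun h => ⟨by have := h.lt_left; omega, by have := h.lt_right; omega, h⟩⟩

lemma IsNoncrossing.leftSetoid (hr : IsNoncrossing r) : IsNoncrossing (leftSetoid r) :=
  hr.comap (Fin.strictMono_castLE _)

lemma IsNoncrossing.rightSetoid (hr : IsNoncrossing r) : IsNoncrossing (rightSetoid r) :=
  hr.comap fun x y (h : x.val < y.val) => Fin.mk_lt_mk.mpr (by omega)

lemma spliceSetoid_leftSetoid_rightSetoid (hr : IsNoncrossing r) :
    spliceSetoid N (lastBlockMin r) (leftSetoid r) (rightSetoid r) = r := by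
  have hm := lastBlockMin_le r
  refine Setoid.ext_natRel fun a b => ?_
  wlog hab : a ≤ b generalizing a b
  · exact ⟨fun h => ((this b a (by omega)).mp h.symm).symm,
      fun h => ((this b a (by omega)).mpr h.symm).symm⟩
  set m := lastBlockMin r
  rcases lt_or_ge a m with ha | ha
  · rw [natRel_spliceSetoid_of_lt _ _ hm ha, natRel_leftSetoid]
    refine ⟨fun h => h.2.2.2, fun h => ?_⟩
    have hb : b < m := by
      by_contra hb
      exact hr.not_natRel_of_lt_lastBlockMin ha (by omega) h
    exact ⟨hb, ha, hb, h⟩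
  rcases ha.lt_or_eq with ha | rfl
  · obtain ⟨a, rfl⟩ : ∃ a', a = m + 1 + a' := ⟨a - m - 1, by omega⟩
    obtain ⟨b, rfl⟩ : ∃ b', b = m + 1 + b' := ⟨b - m - 1, by omega⟩
    rw [natRel_spliceSetoid_add, natRel_rightSetoid]
  rcases hab.eq_or_lt with rfl | hb
  · exact iff_of_true (natRel_refl (by omega)) (natRel_refl (by omega))
  obtain ⟨b, rfl⟩ : ∃ b', b = m + 1 + b' := ⟨b - m - 1, by omega⟩
  rw [natRel_spliceSetoid_pivot, natRel_rightSetoid]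
  constructor
  · intro h
    rw [show m + 1 + (N - m - 1) = N by have := h.lt_left; omega] at h
    exact (natRel_lastBlockMin r).trans h
  · intro h
    rw [show m + 1 + (N - m - 1) = N by have := h.lt_right; omega]
    exact (natRel_lastBlockMin r).symm.trans h

lemma lastBlockMin_spliceSetoid {j : ℕ} (rA : Setoid (Fin j)) (rB : Setoid (Fin (N - j)))
    (hj : j ≤ N) : lastBlockMin (spliceSetoid N j rA rB) = j := by
  refine (lastBlockMin_le_of_natRel _ (natRel_spliceSetoid_pivot_last rA rB hj)).antisymm ?_
  by_contra! h
  have := (natRel_spliceSetoid_of_lt rA rB hj h).mp (natRel_lastBlockMin _)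
  omega

end LastBlock

namespace NCPartition

variable {N : ℕ}

def splice (s : Σ j : Fin (N + 1), NCPartition j × NCPartition (N - j)) : NCPartition (N + 1) :=
  ⟨spliceSetoid N s.1 s.2.1.1 s.2.2.1,
    isNoncrossing_spliceSetoid _ _ (Nat.le_of_lt_succ s.1.isLt) s.2.1.2 s.2.2.2⟩

lemma splice_injective : Injective (splice (N := N)) := by
  rintro ⟨j, ⟨rA, hA⟩, ⟨rB, hB⟩⟩ ⟨j', ⟨rA', hA'⟩, ⟨rB', hB'⟩⟩ h
  have hj := Nat.le_of_lt_succ j.isLt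
  have hj' := Nat.le_of_lt_succ j'.isLt
  have h : spliceSetoid N j rA rB = spliceSetoid N j' rA' rB' := congrArg Subtype.val h
  obtain rfl : j = j' := Fin.ext <| by
    rw [← lastBlockMin_spliceSetoid rA rB hj, h, lastBlockMin_spliceSetoid rA' rB' hj']
  obtain rfl : rA = rA' := Setoid.ext_natRel fun a b => by
    rw [natRel_iff_natRel_spliceSetoid rA rB hj, h, ← natRel_iff_natRel_spliceSetoid rA' rB' hj]
  obtain rfl : rB = rB' := Setoid.ext_natRel fun a b => by
    rw [← natRel_spliceSetoid_add rA rB, h, natRel_spliceSetoid_add]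
  rfl

lemma splice_surjective : Surjective (splice (N := N)) := fun ⟨r, hr⟩ =>
  ⟨⟨⟨lastBlockMin r, Nat.lt_succ_of_le (lastBlockMin_le r)⟩,
    ⟨leftSetoid r, hr.leftSetoid⟩, ⟨rightSetoid r, hr.rightSetoid⟩⟩,
    Subtype.ext (spliceSetoid_leftSetoid_rightSetoid r hr)⟩

noncomputable def spliceEquiv (N : ℕ) :
    (Σ j : Fin (N + 1), NCPartition j × NCPartition (N - j)) ≃ NCPartition (N + 1) :=
  Equiv.ofBijective splice ⟨splice_injective, splice_surjective⟩

lemma nonmaxPositions_spliceEquiv (s : Σ j : Fin (N + 1), NCPartition j × NCPartition (N - j)) :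
    nonmaxPositions (spliceEquiv N s).1 =
      spliceSet N s.1 (nonmaxPositions s.2.1.1) (nonmaxPositions s.2.2.1) :=
  nonmaxPositions_spliceSetoid _ _ (Nat.le_of_lt_succ s.1.isLt)

end NCPartition

theorem exists_equiv_des_eq_nonmaxPositions (n : ℕ) :
    ∃ φ : NCPartition n ≃ Av132Perm n, ∀ π, Des (φ π).1 = nonmaxPositions π.1 := by
  induction n using Nat.strong_induction_on with
  | _ n ih =>
  cases n with
  | zero =>
    refine ⟨⟨fun _ => ⟨1, fun a => a.elim0⟩, fun _ => ⟨⊥, fun ⟨a, _⟩ => a.elim0⟩,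
      fun _ => Subtype.ext (Setoid.ext fun a => a.elim0),
      fun _ => Subtype.ext (Equiv.ext fun a => a.elim0)⟩, fun π => ?_⟩
    ext i
    exact iff_of_false (fun ⟨⟨_, h⟩, _⟩ => by omega)
      (fun ⟨_, _, _, h⟩ => by have := h.lt_right; omega)
  | succ N =>
    choose φ hφ using ih
    let ψ : (Σ j : Fin (N + 1), NCPartition j × NCPartition (N - j)) ≃
        (Σ j : Fin (N + 1), Av132Perm j × Av132Perm (N - j)) :=
      Equiv.sigmaCongrRight fun j => (φ j (by omega)).prodCongr (φ (N - j) (by omega))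
    refine ⟨(NCPartition.spliceEquiv N).symm.trans (ψ.trans (Av132Perm.spliceEquiv N)),
      fun π => ?_⟩
    obtain ⟨s, rfl⟩ := (NCPartition.spliceEquiv N).surjective π
    simp only [Equiv.trans_apply, Equiv.symm_apply_apply, Av132Perm.des_spliceEquiv,
      NCPartition.nonmaxPositions_spliceEquiv]
    exact congrArg₂ (spliceSet N s.1) (hφ _ _ s.2.1) (hφ _ _ s.2.2)

theorem stmt2_general (n : ℕ) :
    ∃ φ : {r : Setoid (Fin n) // IsNoncrossing r} ≃
          {p : Equiv.Perm (Fin n) // Avoids132 p},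
      ∀ π τ : {r : Setoid (Fin n) // IsNoncrossing r},
        π.1 ≤ τ.1 → Des (φ π).1 ⊆ Des (φ τ).1 := by
  obtain ⟨φ, hφ⟩ := exists_equiv_des_eq_nonmaxPositions n
  exact ⟨φ, fun π τ h => by simpa only [hφ] using nonmaxPositions_mono h⟩

/-- There is a bijection `φ` from noncrossing partitions of `[n]` (ordered by
refinement: `π ≤ τ` iff every block of `τ` is a union of blocks of `π`, which
for setoids is exactly `π ≤ τ`) onto 132-avoiding permutations of `[n]`, which
is order-preserving into the descent-set order. -/
theorem stmt2 (n : ℕ) (hn : 1 ≤ n) :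
    ∃ φ : {r : Setoid (Fin n) // IsNoncrossing r} ≃
          {p : Equiv.Perm (Fin n) // Avoids132 p},
      ∀ π τ : {r : Setoid (Fin n) // IsNoncrossing r},
        π.1 ≤ τ.1 → Des (φ π).1 ⊆ Des (φ τ).1 :=
  stmt2_general n
end

section
/- For every n ≥ 1 there exists a bijection φ from the set of 132-avoiding permutations of [n] onto itself such that Des(φ(p)) = α(Des(p)) for every 132-avoiding permutation p, where α denotes reverse complementation of subsets of [n−1]. In particular, the poset of 132-avoiding permutations of [n] ordered by containment of descent sets is self-dual: for all 132-avoiding p, q one has Des(p) ⊆ Des(q) if and only if Des(φ(q)) ⊆ Des(φ(p)). -/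
/-- The reverse complement `α(S) = {i ∈ [n-1] : n - i ∉ S}` of `S ⊆ [n-1]`. -/
def revCompl (n : ℕ) (S : Set ℕ) : Set ℕ :=
  {i | 1 ≤ i ∧ i ≤ n - 1 ∧ n - i ∉ S}

open Set

namespace BinaryTree

variable {α : Type*}

def mirror : BinaryTree α → BinaryTree α
  | nil => nil
  | node x l r => node x r.mirror l.mirror

@[simp]
theorem numNodes_mirror (t : BinaryTree α) : t.mirror.numNodes = t.numNodes := by
  induction t with
  | nil => rfl
  | node _ l r ihl ihr => simp only [mirror, numNodes, ihl, ihr]; omega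

theorem mirror_involutive : Function.Involutive (mirror : BinaryTree α → BinaryTree α) := by
  intro t
  induction t with
  | nil => rfl
  | node _ l r ihl ihr => simp only [mirror, ihl, ihr]

end BinaryTree

namespace Pattern132

-- A permutation of `[0, n)` is handled as a word `w : ℕ → ℕ` of which only the values on
-- `[0, n)` matter, so that the recursion can pass to shorter words without changing types.
def Avoids132On (n : ℕ) (w : ℕ → ℕ) : Prop :=
  ∀ a b c, a < b → b < c → c < n → ¬ (w a < w c ∧ w c < w b)

def descents (n : ℕ) (w : ℕ → ℕ) : Set ℕ :=
  {i | 1 ≤ i ∧ i < n ∧ w i < w (i - 1)}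

section Words

variable {n : ℕ} {v w : ℕ → ℕ}

theorem Avoids132On.congr (hw : Avoids132On n w) (h : EqOn w v (Iio n)) : Avoids132On n v := by
  intro a b c hab hbc hc
  rw [← h (show a < n by omega), ← h (show b < n by omega), ← h hc]
  exact hw a b c hab hbc hc

theorem descents_congr (h : EqOn v w (Iio n)) : descents n v = descents n w := by
  ext i
  simp only [descents, mem_ofPred_eq]
  exact and_congr_right fun _ => and_congr_right fun hi => by
    rw [h hi, h (show i - 1 < n by omega)]

theorem descents_subset_Ioo : descents n w ⊆ Ioo 0 n :=
  fun _ ⟨h1, h2, _⟩ => ⟨h1, h2⟩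

theorem Avoids132On.apply_lt_apply_of_lt_of_lt (hw : Avoids132On n w) (hinj : InjOn w (Iio n))
    {k : ℕ} (hmax : ∀ j < n, w j ≤ w k) {i j : ℕ} (hik : i < k) (hkj : k < j) (hj : j < n) :
    w j < w i := by
  have hjk : w j ≠ w k := fun h => hkj.ne' (hinj hj (show k < n by omega) h)
  have hij : w i ≠ w j := fun h => (hik.trans hkj).ne (hinj (show i < n by omega) hj h)
  have := hw i k j hik hkj hj
  have := hmax j hj
  omega

end Words

/-- `skewJoin a b f g` is the word `(f ⊕ 1) ⊖ g`: the permutation `f` of `[0, a)` shifted above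
the permutation `g` of `[0, b)`, with the maximum `a + b` between them. -/
def skewJoin (a b : ℕ) (f g : ℕ → ℕ) (i : ℕ) : ℕ :=
  if i < a then f i + b else if i = a then a + b else g (i - (a + 1))

section SkewJoin

variable {a b : ℕ} {f g : ℕ → ℕ}

theorem mapsTo_skewJoin (hf : MapsTo f (Iio a) (Iio a)) (hg : MapsTo g (Iio b) (Iio b)) :
    MapsTo (skewJoin a b f g) (Iio (a + b + 1)) (Iio (a + b + 1)) := by
  intro i (hi : i < a + b + 1)
  simp only [skewJoin, mem_Iio]
  split_ifs with h₁ h₂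
  · have : f i < a := hf h₁
    omega
  · omega
  · have : g (i - (a + 1)) < b := hg (show i - (a + 1) < b by omega)
    omega

theorem injOn_skewJoin (hf : MapsTo f (Iio a) (Iio a)) (hg : MapsTo g (Iio b) (Iio b))
    (hf' : InjOn f (Iio a)) (hg' : InjOn g (Iio b)) :
    InjOn (skewJoin a b f g) (Iio (a + b + 1)) := by
  intro i (hi : i < a + b + 1) j (hj : j < a + b + 1) hij
  have hf_lt : ∀ i, i < a → f i < a := fun i h => hf h
  have hg_lt : ∀ i, i - (a + 1) < b → g (i - (a + 1)) < b := fun i h => hg h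
  have := hf_lt i; have := hf_lt j; have := hg_lt i; have := hg_lt j
  simp only [skewJoin] at hij
  split_ifs at hij
  all_goals try omega
  · exact hf' ‹i < a› ‹j < a› (by omega)
  · have := hg' (show i - (a + 1) < b by omega) (show j - (a + 1) < b by omega) hij
    omega

theorem avoids132On_skewJoin (hf : MapsTo f (Iio a) (Iio a)) (hg : MapsTo g (Iio b) (Iio b))
    (hfa : Avoids132On a f) (hgb : Avoids132On b g) :
    Avoids132On (a + b + 1) (skewJoin a b f g) := by
  intro x y z hxy hyz hz
  have hf_lt : ∀ i, i < a → f i < a := fun i h => hf h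
  have hg_lt : ∀ i, i - (a + 1) < b → g (i - (a + 1)) < b := fun i h => hg h
  have := hf_lt x; have := hf_lt y; have := hg_lt x; have := hg_lt z
  have := hfa x y z hxy hyz
  have := hgb (x - (a + 1)) (y - (a + 1)) (z - (a + 1))
  simp only [skewJoin]
  split_ifs <;> omega

def joinDescents (a b : ℕ) (S T : Set ℕ) : Set ℕ :=
  S ∪ {i | i = a + 1 ∧ 0 < b} ∪ {i | a + 1 < i ∧ i - (a + 1) ∈ T}

theorem descents_skewJoin (hf : MapsTo f (Iio a) (Iio a)) (hg : MapsTo g (Iio b) (Iio b)) :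
    descents (a + b + 1) (skewJoin a b f g) = joinDescents a b (descents a f) (descents b g) := by
  ext i
  have e : i - 1 - (a + 1) = i - (a + 1) - 1 := by omega
  have : i - 1 < a → f (i - 1) < a := fun h => hf h
  have : i - (a + 1) < b → g (i - (a + 1)) < b := fun h => hg h
  simp only [descents, joinDescents, skewJoin, mem_union, mem_ofPred_eq, e]
  split_ifs <;> omega

theorem eq_of_eqOn_skewJoin {a' b' : ℕ} {f' g' : ℕ → ℕ} (hf : MapsTo f (Iio a) (Iio a))
    (hf' : MapsTo f' (Iio a') (Iio a')) (hab : a + b = a' + b')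
    (h : EqOn (skewJoin a b f g) (skewJoin a' b' f' g') (Iio (a + b + 1))) :
    a = a' ∧ EqOn f f' (Iio a) ∧ EqOn g g' (Iio b) := by
  have ha : a = a' := by
    have h₁ := h (show a < a + b + 1 by omega)
    have h₂ := h (show a' < a + b + 1 by omega)
    have : a < a' → f' a < a' := fun h => hf' h
    have : a' < a → f a' < a := fun h => hf h
    simp only [skewJoin] at h₁ h₂
    split_ifs at h₁ h₂ <;> omega
  subst ha
  refine ⟨rfl, fun i (hi : i < a) => ?_, fun j (hj : j < b) => ?_⟩
  · have := h (show i < a + b + 1 by omega)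
    simp only [skewJoin, if_pos hi] at this
    omega
  · have := h (show a + 1 + j < a + b + 1 by omega)
    simp only [skewJoin, if_neg (show ¬ a + 1 + j < a by omega),
      if_neg (show a + 1 + j ≠ a by omega), Nat.add_sub_cancel_left] at this
    exact this

end SkewJoin

theorem revCompl_joinDescents {a b : ℕ} {S T : Set ℕ} (hS : S ⊆ Ioo 0 a) (hT : T ⊆ Ioo 0 b) :
    revCompl (a + b + 1) (joinDescents a b S T) =
      joinDescents b a (revCompl b T) (revCompl a S) := by
  ext i
  have e₁ : a + b + 1 - i - (a + 1) = b - i := by omega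
  have e₂ : b + 1 ≤ i → a + b + 1 - i = a - (i - (b + 1)) := by omega
  simp only [revCompl, joinDescents, mem_union, mem_ofPred_eq]
  grind

theorem revCompl_subset_revCompl_iff {n : ℕ} {S T : Set ℕ} (hT : T ⊆ Ioo 0 n) :
    revCompl n S ⊆ revCompl n T ↔ T ⊆ S := by
  refine ⟨fun h i hiT => ?_, fun h i ⟨h₁, h₂, h₃⟩ => ⟨h₁, h₂, fun hT => h₃ (h hT)⟩⟩
  obtain ⟨hi₀, hin⟩ := hT hiT
  by_contra hiS
  have hni : n - (n - i) = i := Nat.sub_sub_self hin.le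
  exact (h (show n - i ∈ revCompl n S from ⟨by omega, by omega, by rwa [hni]⟩)).2.2 (by rwa [hni])

section Decomposition

variable {n k : ℕ} {w : ℕ → ℕ}

theorem Avoids132On.apply_lt_sub_of_lt (ha : Avoids132On (n + 1) w)
    (hw : BijOn w (Iio (n + 1)) (Iio (n + 1))) (hwk : w k = n) {j : ℕ} (hkj : k < j)
    (hj : j < n + 1) : w j < n - k := by
  have hmax : ∀ i < n + 1, w i ≤ w k := fun i hi => hwk ▸ Nat.lt_succ_iff.mp (hw.mapsTo hi)
  have hjn : w j < n := by
    have := hmax j hj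
    have : w j ≠ w k := fun h => hkj.ne' (hw.injOn hj (show k < n + 1 by omega) h)
    omega
  have hsurj : SurjOn w (Finset.Ioo k (n + 1)) (Finset.Iic (w j)) := by
    intro v hv
    rw [Finset.coe_Iic, mem_Iic] at hv
    obtain ⟨i, hi : i < n + 1, rfl⟩ := hw.surjOn (show v < n + 1 by omega)
    have : ¬ i < k := fun hik => (ha.apply_lt_apply_of_lt_of_lt hw.injOn hmax hik hkj hj).not_ge hv
    have : i ≠ k := by rintro rfl; omega
    exact ⟨i, by simp only [Finset.coe_Ioo, mem_Ioo]; omega, rfl⟩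
  have := Finset.card_le_card_of_surjOn w hsurj
  simp only [Nat.card_Iic, Nat.card_Ioo] at this
  omega

theorem Avoids132On.sub_le_apply_of_lt (ha : Avoids132On (n + 1) w)
    (hw : BijOn w (Iio (n + 1)) (Iio (n + 1))) (hwk : w k = n) {i : ℕ} (hik : i < k) :
    n - k ≤ w i := by
  have hmax : ∀ i < n + 1, w i ≤ w k := fun i hi => hwk ▸ Nat.lt_succ_iff.mp (hw.mapsTo hi)
  have hsurj : SurjOn w (Finset.Iio k) (Finset.Ico (w i) n) := by
    intro v hv
    rw [Finset.coe_Ico, mem_Ico] at hv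
    obtain ⟨j, hj : j < n + 1, rfl⟩ := hw.surjOn (show v < n + 1 by omega)
    have : ¬ k < j := fun hkj => (ha.apply_lt_apply_of_lt_of_lt hw.injOn hmax hik hkj hj).not_ge hv.1
    have : j ≠ k := by rintro rfl; omega
    exact ⟨j, by simp only [Finset.coe_Iio, mem_Iio]; omega, rfl⟩
  have := Finset.card_le_card_of_surjOn w hsurj
  simp only [Nat.card_Iio, Nat.card_Ico] at this
  omega

theorem Avoids132On.exists_eqOn_skewJoin (hw : BijOn w (Iio (n + 1)) (Iio (n + 1)))
    (ha : Avoids132On (n + 1) w) :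
    ∃ a b f g, a + b = n ∧ BijOn f (Iio a) (Iio a) ∧ Avoids132On a f ∧
      BijOn g (Iio b) (Iio b) ∧ Avoids132On b g ∧ EqOn w (skewJoin a b f g) (Iio (n + 1)) := by
  obtain ⟨k, hk : k < n + 1, hwk⟩ := hw.surjOn (show n < n + 1 from n.lt_succ_self)
  have hw_lt : ∀ i, i < n + 1 → w i < n + 1 := fun i h => hw.mapsTo h
  have hw_inj : ∀ i j, i < n + 1 → j < n + 1 → w i = w j → i = j :=
    fun i j hi hj => hw.injOn hi hj
  have hleft : ∀ i, i < k → n - k ≤ w i := fun i => ha.sub_le_apply_of_lt hw hwk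
  refine ⟨k, n - k, fun i => w i - (n - k), fun j => w (k + 1 + j), by omega, ?_, ?_, ?_, ?_, ?_⟩
  · refine ((finite_Iio k).injOn_iff_bijOn_of_mapsTo fun i (hi : i < k) => ?_).mp
      fun i (hi : i < k) j (hj : j < k) hij => ?_
    · have := hleft i hi; have := hw_lt i (by omega); have := hw_inj i k (by omega) hk
      show w i - (n - k) < k
      omega
    · have := hleft i hi; have := hleft j hj
      exact hw_inj i j (by omega) (by omega) (by omega)
  · intro x y z hxy hyz hz
    have := hleft x (by omega); have := hleft y (by omega); have := hleft z hz
    have := ha x y z hxy hyz (by omega)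
    beta_reduce
    omega
  · refine ((finite_Iio (n - k)).injOn_iff_bijOn_of_mapsTo fun j (hj : j < n - k) =>
      ha.apply_lt_sub_of_lt hw hwk (show k < k + 1 + j by omega) (by omega)).mp
      fun i (hi : i < n - k) j (hj : j < n - k) hij => ?_
    have := hw_inj _ _ (by omega) (by omega) hij
    omega
  · intro x y z hxy hyz hz
    exact ha _ _ _ (by omega) (by omega) (by omega)
  · intro i (hi : i < n + 1)
    have := hleft i
    simp only [skewJoin]
    split_ifs with h₁ h₂
    · omega
    · subst h₂; omega
    · congr 1; omega

end Decomposition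

open BinaryTree

def treePerm : BinaryTree Unit → ℕ → ℕ
  | nil => fun _ => 0
  | node _ l r => skewJoin l.numNodes r.numNodes (treePerm l) (treePerm r)

theorem mapsTo_treePerm (t : BinaryTree Unit) :
    MapsTo (treePerm t) (Iio t.numNodes) (Iio t.numNodes) := by
  induction t with
  | nil => exact fun i (hi : i < 0) => absurd hi i.not_lt_zero
  | node _ l r ihl ihr => exact mapsTo_skewJoin ihl ihr

theorem injOn_treePerm (t : BinaryTree Unit) : InjOn (treePerm t) (Iio t.numNodes) := by
  induction t with
  | nil => exact fun i (hi : i < 0) => absurd hi i.not_lt_zero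
  | node _ l r ihl ihr => exact injOn_skewJoin (mapsTo_treePerm l) (mapsTo_treePerm r) ihl ihr

theorem avoids132On_treePerm (t : BinaryTree Unit) : Avoids132On t.numNodes (treePerm t) := by
  induction t with
  | nil => exact fun _ _ c _ _ (hc : c < 0) => absurd hc c.not_lt_zero
  | node _ l r ihl ihr =>
    exact avoids132On_skewJoin (mapsTo_treePerm l) (mapsTo_treePerm r) ihl ihr

theorem exists_eqOn_treePerm {n : ℕ} {w : ℕ → ℕ} (hw : BijOn w (Iio n) (Iio n))
    (ha : Avoids132On n w) :
    ∃ t : BinaryTree Unit, t.numNodes = n ∧ EqOn w (treePerm t) (Iio n) := by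
  induction n using Nat.strong_induction_on generalizing w with
  | _ n ih =>
    rcases n with _ | n
    · exact ⟨nil, rfl, fun i (hi : i < 0) => absurd hi i.not_lt_zero⟩
    obtain ⟨a, b, f, g, hab, hf, hfa, hg, hgb, hw⟩ := ha.exists_eqOn_skewJoin hw
    obtain ⟨l, rfl, hl⟩ := ih a (by omega) hf hfa
    obtain ⟨r, rfl, hr⟩ := ih b (by omega) hg hgb
    refine ⟨node () l r, by rw [numNodes, hab], fun i (hi : i < n + 1) => (hw hi).trans ?_⟩
    simp only [treePerm, skewJoin]
    split_ifs with h₁ h₂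
    · rw [hl h₁]
    · rfl
    · exact hr (show i - (l.numNodes + 1) < r.numNodes by omega)

theorem eq_of_eqOn_treePerm {t s : BinaryTree Unit} (hts : t.numNodes = s.numNodes)
    (h : EqOn (treePerm t) (treePerm s) (Iio t.numNodes)) : t = s := by
  induction t generalizing s with
  | nil =>
    cases s with
    | nil => rfl
    | node => simp only [numNodes] at hts; omega
  | node _ l r ihl ihr =>
    cases s with
    | nil => simp only [numNodes] at hts; omega
    | node _ l' r' =>
      simp only [numNodes, Nat.add_right_cancel_iff] at hts
      obtain ⟨hl, hfl, hgr⟩ :=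
        eq_of_eqOn_skewJoin (mapsTo_treePerm l) (mapsTo_treePerm l') hts h
      rw [ihl hl hfl, ihr (by omega) hgr]

theorem descents_treePerm_mirror (t : BinaryTree Unit) :
    descents t.numNodes (treePerm t.mirror) =
      revCompl t.numNodes (descents t.numNodes (treePerm t)) := by
  induction t with
  | nil => ext i; simp only [descents, revCompl, numNodes, mem_ofPred_eq]; omega
  | node _ l r ihl ihr =>
    have hl := numNodes_mirror l ▸ mapsTo_treePerm l.mirror
    have hr := numNodes_mirror r ▸ mapsTo_treePerm r.mirror
    have hswap : r.numNodes + l.numNodes + 1 = l.numNodes + r.numNodes + 1 := by omega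
    simp only [mirror, treePerm, numNodes_mirror, numNodes]
    rw [← hswap, descents_skewJoin hr hl, ihl, ihr, hswap,
      descents_skewJoin (mapsTo_treePerm l) (mapsTo_treePerm r),
      revCompl_joinDescents descents_subset_Ioo descents_subset_Ioo]

section Perm

variable {n : ℕ}

def toWord (p : Equiv.Perm (Fin n)) (i : ℕ) : ℕ :=
  if h : i < n then p ⟨i, h⟩ else 0

theorem toWord_of_lt (p : Equiv.Perm (Fin n)) {i : ℕ} (h : i < n) : toWord p i = p ⟨i, h⟩ :=
  dif_pos h

theorem avoids132_iff_avoids132On_toWord (p : Equiv.Perm (Fin n)) :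
    Avoids132 p ↔ Avoids132On n (toWord p) := by
  refine ⟨fun hp a b c hab hbc hc => ?_, fun hw a b c hab hbc => ?_⟩
  · rw [toWord_of_lt p (hab.trans (hbc.trans hc)), toWord_of_lt p (hbc.trans hc),
      toWord_of_lt p hc]
    exact hp ⟨a, _⟩ ⟨b, _⟩ ⟨c, hc⟩ hab hbc
  · simpa only [toWord_of_lt p a.2, toWord_of_lt p b.2, toWord_of_lt p c.2, Fin.eta, Fin.lt_def]
      using hw a b c hab hbc c.2

theorem des_eq_descents_toWord (p : Equiv.Perm (Fin n)) : Des p = descents n (toWord p) := by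
  ext i
  simp only [Des, descents, mem_ofPred_eq]
  constructor
  · rintro ⟨⟨h₁, h₂⟩, hd⟩
    exact ⟨h₁, h₂, by rwa [toWord_of_lt p h₂, toWord_of_lt p (by omega)]⟩
  · rintro ⟨h₁, h₂, hd⟩
    rw [toWord_of_lt p h₂, toWord_of_lt p (by omega)] at hd
    exact ⟨⟨h₁, h₂⟩, hd⟩

theorem bijOn_toWord (p : Equiv.Perm (Fin n)) : BijOn (toWord p) (Iio n) (Iio n) := by
  refine ((finite_Iio n).injOn_iff_bijOn_of_mapsTo fun i (hi : i < n) => ?_).mp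
    fun i (hi : i < n) j (hj : j < n) hij => ?_
  · rw [mem_Iio, toWord_of_lt p hi]
    exact (p _).2
  · rw [toWord_of_lt p hi, toWord_of_lt p hj] at hij
    exact congrArg Fin.val (p.injective (Fin.ext hij))

theorem eq_of_eqOn_toWord {p q : Equiv.Perm (Fin n)} (h : EqOn (toWord p) (toWord q) (Iio n)) :
    p = q :=
  Equiv.ext fun i => Fin.ext (by simpa only [toWord_of_lt _ i.2, Fin.eta] using h i.2)

noncomputable def ofWord (w : ℕ → ℕ) (hm : MapsTo w (Iio n) (Iio n)) (hi : InjOn w (Iio n)) :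
    Equiv.Perm (Fin n) :=
  Equiv.ofBijective (fun i => ⟨w i, hm i.2⟩) <| Finite.injective_iff_bijective.mp
    fun i j hij => Fin.ext (hi i.2 j.2 (congrArg Fin.val hij))

theorem toWord_ofWord (w : ℕ → ℕ) (hm : MapsTo w (Iio n) (Iio n)) (hi : InjOn w (Iio n)) :
    EqOn (toWord (ofWord w hm hi)) w (Iio n) :=
  fun i (h : i < n) => by rw [toWord_of_lt _ h]; rfl

theorem des_subset_Ioo (p : Equiv.Perm (Fin n)) : Des p ⊆ Ioo 0 n :=
  des_eq_descents_toWord p ▸ descents_subset_Ioo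

noncomputable def treeToPerm (t : BinaryTree Unit) (ht : t.numNodes = n) : Equiv.Perm (Fin n) :=
  ofWord (treePerm t) (ht ▸ mapsTo_treePerm t) (ht ▸ injOn_treePerm t)

theorem toWord_treeToPerm (t : BinaryTree Unit) (ht : t.numNodes = n) :
    EqOn (toWord (treeToPerm t ht)) (treePerm t) (Iio n) :=
  toWord_ofWord ..

noncomputable def treeEquiv (n : ℕ) :
    {t : BinaryTree Unit // t.numNodes = n} ≃ {p : Equiv.Perm (Fin n) // Avoids132 p} := by
  refine Equiv.ofBijective (fun t => ⟨treeToPerm t.1 t.2, ?_⟩) ⟨fun t s hts => ?_, fun p => ?_⟩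
  · rw [avoids132_iff_avoids132On_toWord]
    exact (t.2 ▸ avoids132On_treePerm t.1).congr (toWord_treeToPerm t.1 t.2).symm
  · have hts : treeToPerm t.1 t.2 = treeToPerm s.1 s.2 := congrArg Subtype.val hts
    have h : EqOn (treePerm t.1) (treePerm s.1) (Iio t.1.numNodes) := fun i hi => by
      rw [t.2] at hi
      rw [← toWord_treeToPerm t.1 t.2 hi, ← toWord_treeToPerm s.1 s.2 hi, hts]
    exact Subtype.ext (eq_of_eqOn_treePerm (t.2.trans s.2.symm) h)
  · obtain ⟨t, ht, h⟩ := exists_eqOn_treePerm (bijOn_toWord p.1)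
      ((avoids132_iff_avoids132On_toWord p.1).1 p.2)
    exact ⟨⟨t, ht⟩, Subtype.ext (eq_of_eqOn_toWord ((toWord_treeToPerm t ht).trans h.symm))⟩

theorem des_treeEquiv (t : {t : BinaryTree Unit // t.numNodes = n}) :
    Des (treeEquiv n t).1 = descents n (treePerm t.1) :=
  (des_eq_descents_toWord _).trans (descents_congr (toWord_treeToPerm t.1 t.2))

end Perm

end Pattern132

open Pattern132

theorem stmt6_general (n : ℕ) :
    ∃ φ : {p : Equiv.Perm (Fin n) // Avoids132 p} ≃
          {p : Equiv.Perm (Fin n) // Avoids132 p},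
      (∀ p, Des (φ p).1 = revCompl n (Des p.1)) ∧
      (∀ p q : {p : Equiv.Perm (Fin n) // Avoids132 p},
        Des p.1 ⊆ Des q.1 ↔ Des (φ q).1 ⊆ Des (φ p).1) := by
  let μ : {t : BinaryTree Unit // t.numNodes = n} ≃ {t : BinaryTree Unit // t.numNodes = n} :=
    (BinaryTree.mirror_involutive.toPerm _).subtypeEquiv fun t => by simp
  let φ := (treeEquiv n).symm.trans (μ.trans (treeEquiv n))
  have hφ : ∀ p, Des (φ p).1 = revCompl n (Des p.1) := by
    intro p
    obtain ⟨⟨t, rfl⟩, rfl⟩ := (treeEquiv _).surjective p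
    simp only [φ, Equiv.trans_apply, Equiv.symm_apply_apply, des_treeEquiv]
    exact descents_treePerm_mirror t
  refine ⟨φ, hφ, fun p q => ?_⟩
  rw [hφ p, hφ q, revCompl_subset_revCompl_iff (des_subset_Ioo p.1)]

/-- There is a bijection `φ` of the set of 132-avoiding permutations of `[n]`
onto itself with `Des (φ p) = α (Des p)` for all `p`; in particular the poset
of 132-avoiding permutations ordered by containment of descent sets is
self-dual: `Des p ⊆ Des q ↔ Des (φ q) ⊆ Des (φ p)`. -/
theorem stmt6 (n : ℕ) (hn : 1 ≤ n) :
    ∃ φ : {p : Equiv.Perm (Fin n) // Avoids132 p} ≃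
          {p : Equiv.Perm (Fin n) // Avoids132 p},
      (∀ p, Des (φ p).1 = revCompl n (Des p.1)) ∧
      (∀ p q : {p : Equiv.Perm (Fin n) // Avoids132 p},
        Des p.1 ⊆ Des q.1 ↔ Des (φ q).1 ⊆ Des (φ p).1) :=
  stmt6_general n
end

section
/- Let n ≥ 1, let p be a 132-avoiding permutation of [n], and let 1 ≤ t ≤ n be such that p(1) < p(2) < ⋯ < p(t). Then the values p(1), p(2), …, p(t) are consecutive integers, i.e., p(i) = p(1) + (i−1) for all 1 ≤ i ≤ t. -/
namespace Avoids132

variable {n : ℕ} {p : Equiv.Perm (Fin n)}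

theorem lt_of_apply_mem_Ioo (hp : Avoids132 p) {a b c : Fin n} (hab : a < b)
    (hc : p c ∈ Set.Ioo (p a) (p b)) : c < b := by
  by_contra! hbc
  have hne : c ≠ b := by rintro rfl; exact hc.2.false
  exact hp a b c hab (lt_of_le_of_ne hbc hne.symm) hc

theorem map_Icc_eq_Icc (hp : Avoids132 p) {i j : Fin n} (hmono : StrictMonoOn p (Set.Iic j))
    (hij : i ≤ j) : (Finset.Icc i j).map p.toEmbedding = Finset.Icc (p i) (p j) := by
  ext v
  obtain ⟨c, rfl⟩ := p.surjective v
  simp only [Finset.mem_map_equiv, Finset.mem_Icc, Equiv.symm_apply_apply]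
  constructor
  · rintro ⟨hic, hcj⟩
    exact ⟨hmono.monotoneOn (Set.mem_Iic.2 hij) hcj hic, hmono.monotoneOn hcj Set.self_mem_Iic hcj⟩
  · rintro ⟨hic, hcj⟩
    have hci : i ≤ c := by
      by_contra! hci
      exact (hmono (hci.le.trans hij) (Set.mem_Iic.2 hij) hci).not_ge hic
    refine ⟨hci, ?_⟩
    by_contra! hjc
    have hic : p i < p c := hic.lt_of_ne (p.injective.ne (hij.trans_lt hjc).ne)
    have hcj : p c < p j := hcj.lt_of_ne (p.injective.ne hjc.ne')
    have hij : i < j := hij.lt_of_ne (p.injective.ne_iff.1 (hic.trans hcj).ne)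
    exact (hp.lt_of_apply_mem_Ioo hij ⟨hic, hcj⟩).not_gt hjc

theorem val_apply_eq_add (hp : Avoids132 p) {i j : Fin n} (hmono : StrictMonoOn p (Set.Iic j))
    (hij : i ≤ j) : (p j : ℕ) = p i + (j - i) := by
  have hcard := congrArg Finset.card (hp.map_Icc_eq_Icc hmono hij)
  rw [Finset.card_map, Fin.card_Icc, Fin.card_Icc] at hcard
  have hpij : p i ≤ p j := hmono.monotoneOn (Set.mem_Iic.2 hij) Set.self_mem_Iic hij
  rw [Fin.le_iff_val_le_val] at hij hpij
  omega

end Avoids132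

/-- If `p` is 132-avoiding and its first `t` entries are increasing
(`p(1) < p(2) < ⋯ < p(t)`, here 0-based: positions `0, …, t-1`), then these
values are consecutive integers: `p(i) = p(1) + (i - 1)` for `1 ≤ i ≤ t`,
i.e. 0-based `(p ⟨i⟩ : ℕ) = (p ⟨0⟩ : ℕ) + i` for `i < t`. -/
theorem stmt7 (n : ℕ) (p : Equiv.Perm (Fin n)) (hp : Avoids132 p)
    (t : ℕ) (ht2 : t ≤ n)
    (hmono : ∀ i j : ℕ, (hj : j < t) → (hij : i < j) →
      p ⟨i, by omega⟩ < p ⟨j, by omega⟩) :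
    ∀ i : ℕ, (hi : i < t) →
      (p ⟨i, by omega⟩ : ℕ) = (p ⟨0, by omega⟩ : ℕ) + i := by
  intro i hi
  have hmonoOn : StrictMonoOn p (Set.Iic ⟨i, by omega⟩) := fun a _ b hb hab =>
    hmono a b (lt_of_le_of_lt hb hi) hab
  simpa using hp.val_apply_eq_add hmonoOn (Fin.mk_le_mk.2 i.zero_le)
end

section
/- For every n ≥ 1, the number of signed permutations of [n] avoiding the patterns 21 and 2̄1̄ is the central binomial coefficient C(2n,n); that is, |B_n(21, 2̄1̄)| = C(2n,n). -/
/-!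
An avoiding signed permutation is determined by its set `S` of barred positions and the set
`T = |b|(S)` of barred values: the restriction of `|b|` to `S` is the increasing bijection
`S → T`, and its restriction to the complement of `S` is the increasing bijection onto the
complement of `T`. Conversely every pair `(S, T)` with `#S = #T` arises this way, so the count
is `∑ₖ C(n,k)² = C(2n,n)` by Vandermonde's identity.
-/

/-- A signed permutation of `[n]`: an underlying (absolute-value) permutation
`perm` of `Fin n` (0-based) together with a bar indicator on each position. -/
structure SignedPerm (n : ℕ) where
  perm : Equiv.Perm (Fin n)
  bar : Fin n → Bool

/-- `b` avoids the patterns `21` and `2̄1̄`: there are no positions `i < j`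
with `b_i` and `b_j` both barred or both unbarred and `|b_i| > |b_j|`. -/
def AvoidsB {n : ℕ} (b : SignedPerm n) : Prop :=
  ∀ i j : Fin n, i < j → b.bar i = b.bar j → ¬ b.perm j < b.perm i

/-- The rank of the symbol in position `i` of `b` with respect to the total
order `1 < 2 < ⋯ < n < n̄ < ⋯ < 2̄ < 1̄` (0-based: an unbarred value `v` has
rank `v`, a barred value `v` has rank `2n - 1 - v`). -/
def symbKey {n : ℕ} (b : SignedPerm n) (i : Fin n) : ℕ :=
  if b.bar i then 2 * n - 1 - (b.perm i : ℕ) else (b.perm i : ℕ)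

/-- The descent set of a signed permutation, as a set of 1-based positions in
`[n]`: `i ∈ [n-1]` is a descent iff `b_i > b_{i+1}` in the order
`1 < ⋯ < n < n̄ < ⋯ < 1̄`, and `n` is a descent iff `b_n` is barred. -/
def DesB {n : ℕ} (b : SignedPerm n) : Set ℕ :=
  {i | (∃ h : 1 ≤ i ∧ i < n,
          symbKey b ⟨i, h.2⟩ <
            symbKey b ⟨i - 1, Nat.lt_of_le_of_lt (Nat.sub_le i 1) h.2⟩)
    ∨ (∃ h : 0 < n, i = n ∧ b.bar ⟨n - 1, Nat.sub_lt h Nat.one_pos⟩ = true)}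

open Finset

noncomputable def orderIsoOfCardEq {α β : Type*} [Fintype α] [LinearOrder α] [Fintype β]
    [LinearOrder β] (h : Fintype.card α = Fintype.card β) : α ≃o β :=
  (monoEquivOfFin α h).symm.trans (monoEquivOfFin β rfl)

theorem StrictMonoOn.eqOn_of_image_eq {α β : Type*} [LinearOrder α] [WellFoundedLT α]
    [Preorder β] {A : Set α} {f g : α → β} (hf : StrictMonoOn f A) (hg : StrictMonoOn g A)
    (h : f '' A = g '' A) : Set.EqOn f g A := fun x hx ↦ by
  rw [Set.image_eq_range, Set.image_eq_range,
    StrictMono.range_inj (Set.strictMonoOn_iff_strictMono.1 hf)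
      (Set.strictMonoOn_iff_strictMono.1 hg)] at h
  exact congrFun h ⟨x, hx⟩

section ClasswiseStrictMono

variable {α : Type*} [LinearOrder α]

def ClasswiseStrictMono (A : Set α) (σ : Equiv.Perm α) : Prop :=
  StrictMonoOn σ A ∧ StrictMonoOn σ Aᶜ

theorem ClasswiseStrictMono.eq_of_image_eq [WellFoundedLT α] {A : Set α} {σ τ : Equiv.Perm α}
    (hσ : ClasswiseStrictMono A σ) (hτ : ClasswiseStrictMono A τ) (h : σ '' A = τ '' A) :
    σ = τ := by
  have hc : σ '' Aᶜ = τ '' Aᶜ := by rw [σ.image_compl, τ.image_compl, h]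
  ext x
  by_cases hx : x ∈ A
  · rw [hσ.1.eqOn_of_image_eq hτ.1 h hx]
  · rw [hσ.2.eqOn_of_image_eq hτ.2 hc hx]

variable [Fintype α]

theorem exists_classwiseStrictMono_image_eq {s t : Finset α} (h : #s = #t) :
    ∃ σ : Equiv.Perm α, ClasswiseStrictMono s σ ∧ σ '' s = t := by
  let e : {x // x ∈ s} ≃o {x // x ∈ t} := orderIsoOfCardEq (by simpa using h)
  let e' : {x // x ∉ s} ≃o {x // x ∉ t} :=
    orderIsoOfCardEq (by simp [Fintype.card_subtype_compl, h])
  let σ : Equiv.Perm α := Equiv.subtypeCongr e.toEquiv e'.toEquiv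
  have apply_mem {x} (hx : x ∈ s) : σ x = e ⟨x, hx⟩ := by simp [σ, Equiv.subtypeCongr, hx]
  have apply_not_mem {x} (hx : x ∉ s) : σ x = e' ⟨x, hx⟩ := by
    simp [σ, Equiv.subtypeCongr, hx]
  refine ⟨σ, ⟨fun x hx y hy hxy ↦ ?_, fun x hx y hy hxy ↦ ?_⟩, ?_⟩
  · rw [apply_mem hx, apply_mem hy, Subtype.coe_lt_coe, e.lt_iff_lt]
    exact hxy
  · rw [apply_not_mem hx, apply_not_mem hy, Subtype.coe_lt_coe, e'.lt_iff_lt]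
    exact hxy
  · ext y
    refine ⟨?_, fun hy ↦ ⟨e.symm ⟨y, hy⟩, (e.symm ⟨y, hy⟩).2, ?_⟩⟩
    · rintro ⟨x, hx, rfl⟩
      rw [apply_mem hx]
      exact (e _).2
    · rw [apply_mem (e.symm ⟨y, hy⟩).2]
      simp

theorem card_classwiseStrictMono (s : Finset α) :
    Nat.card {σ : Equiv.Perm α // ClasswiseStrictMono s σ} = (Fintype.card α).choose #s := by
  let f (σ : {σ : Equiv.Perm α // ClasswiseStrictMono s σ}) : {t : Finset α // #t = #s} :=
    ⟨s.map σ.1.toEmbedding, card_map _⟩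
  have hf : Function.Bijective f := by
    refine ⟨fun σ τ hστ ↦ Subtype.ext (σ.2.eq_of_image_eq τ.2 ?_), fun t ↦ ?_⟩
    · have := congrArg (fun t ↦ ((t.1 : Finset α) : Set α)) hστ
      simpa only [f, coe_map, Equiv.coe_toEmbedding] using this
    · obtain ⟨σ, hσ, hσt⟩ := exists_classwiseStrictMono_image_eq t.2.symm
      exact ⟨⟨σ, hσ⟩, Subtype.ext (coe_injective (by simpa [f] using hσt))⟩
  rw [Nat.card_eq_of_bijective f hf, Nat.card_eq_fintype_card, Fintype.card_finset_len]

end ClasswiseStrictMono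

theorem avoidsB_iff_classwiseStrictMono {n : ℕ} (b : SignedPerm n) :
    AvoidsB b ↔ ClasswiseStrictMono {i | b.bar i = true} b.perm := by
  have lt_iff {i j : Fin n} (hij : i < j) : ¬ b.perm j < b.perm i ↔ b.perm i < b.perm j :=
    ⟨fun h ↦ (not_lt.1 h).lt_of_ne (b.perm.injective.ne hij.ne), lt_asymm⟩
  refine ⟨fun hb ↦ ⟨fun i hi j hj hij ↦ (lt_iff hij).1 (hb i j hij ?_),
    fun i hi j hj hij ↦ (lt_iff hij).1 (hb i j hij ?_)⟩,
    fun hb i j hij hbar ↦ (lt_iff hij).2 ?_⟩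
  · exact hi.trans hj.symm
  · exact (Bool.eq_false_iff.2 hi).trans (Bool.eq_false_iff.2 hj).symm
  · cases hi : b.bar i
    · exact hb.2 (Bool.eq_false_iff.1 hi) (Bool.eq_false_iff.1 (hbar.symm.trans hi)) hij
    · exact hb.1 hi (hbar.symm.trans hi) hij

noncomputable def avoidsBEquiv (n : ℕ) : {b : SignedPerm n // AvoidsB b} ≃
    Σ s : Finset (Fin n), {σ : Equiv.Perm (Fin n) // ClasswiseStrictMono s σ} where
  toFun b := ⟨({i | b.1.bar i} : Finset (Fin n)), b.1.perm, by
    simpa [avoidsB_iff_classwiseStrictMono] using b.2⟩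
  invFun x := ⟨⟨x.2.1, fun i ↦ decide (i ∈ x.1)⟩, by
    simpa [avoidsB_iff_classwiseStrictMono] using x.2.2⟩
  left_inv := by
    rintro ⟨⟨σ, c⟩, hb⟩
    simp
  right_inv := by
    rintro ⟨s, σ, hσ⟩
    exact Sigma.subtype_ext (by simp) rfl

theorem stmt12_general (n : ℕ) :
    Nat.card {b : SignedPerm n // AvoidsB b} = (2 * n).choose n := by
  rw [Nat.card_congr (avoidsBEquiv n), Nat.card_sigma]
  simp only [card_classwiseStrictMono, Fintype.card_fin]
  rw [← powerset_univ, Finset.sum_powerset_apply_card]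
  simp [← sq, Nat.sum_range_choose_sq]

/-- The number of signed permutations of `[n]` avoiding `21` and `2̄1̄` is the
central binomial coefficient `C(2n, n)`. -/
theorem stmt12 (n : ℕ) (hn : 1 ≤ n) :
    Nat.card {b : SignedPerm n // AvoidsB b} = (2 * n).choose n :=
  stmt12_general n
end
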